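/- arXiv:1501.02978 — 7 statements merged into one kernel-verified Lean document; each statement's English description precedes it below -/
import Mathlib

section
/- Let A be a finite-dimensional algebra, a ∈ A an element such that θ_a : aA → Hom_A(Aa, A) (given by θ_a(ax)(y) = yx) is an isomorphism, and let b ∈ A. Then θ_a induces a k-linear isomorphism (aA ∩ Ab)/(aAb) ≅ Hom-underline_A(Aa, Ab), where Hom-underline_A(Aa, Ab) = Hom_A(Aa, Ab)/P(Aa, Ab) is the quotient by homomorphisms factoring through a projective module. -/
/-!
Restricting `θ` to `aA ∩ Ab` gives a map onto `Hom_A(Aa, Ab)`: `θ z` is right multiplication,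
and `θ z a = z`, so `θ z` lands in `Ab` exactly when `z ∈ Ab`. Since `A → Ab`, `x ↦ x b`, is a
surjection from a projective, a map `Aa → Ab` factors through a projective iff it is
`y ↦ θ w y * b = θ (w b) y` for some `w ∈ aA`; evaluating at `a` shows that `θ z` has this form
iff `z ∈ aAb`. So `aAb` is the kernel of `aA ∩ Ab → Hom_A(Aa, Ab) / P(Aa, Ab)`.
-/

universe u v

/-- A factorization of `f` through a projective module. -/
structure ProjFactorization (A : Type v) {X Y : Type v} [Ring A] [AddCommGroup X] [Module A X]
    [AddCommGroup Y] [Module A Y] (f : X →ₗ[A] Y) : Type (v + 1) where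
  Q : Type v
  [acg : AddCommGroup Q]
  [mod : Module A Q]
  proj : Module.Projective A Q
  g : X →ₗ[A] Q
  h : Q →ₗ[A] Y
  fac : f = h.comp g

/-- `f` factors through a projective module. -/
def FactorsThroughProjective (A : Type v) {X Y : Type v} [Ring A] [AddCommGroup X] [Module A X]
    [AddCommGroup Y] [Module A Y] (f : X →ₗ[A] Y) : Prop :=
  Nonempty (ProjFactorization A f)

section FactorsThroughProjective

variable {A : Type v} [Ring A] {X Y P : Type v} [AddCommGroup X] [Module A X]
  [AddCommGroup Y] [Module A Y] [AddCommGroup P] [Module A P]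

theorem factorsThroughProjective_comp [Module.Projective A P] (g : X →ₗ[A] P) (h : P →ₗ[A] Y) :
    FactorsThroughProjective A (h ∘ₗ g) :=
  ⟨⟨P, inferInstance, g, h, rfl⟩⟩

theorem FactorsThroughProjective.exists_eq_comp {f : X →ₗ[A] Y}
    (hf : FactorsThroughProjective A f) {Z : Type*} [AddCommGroup Z] [Module A Z]
    {π : Z →ₗ[A] Y} (hπ : Function.Surjective π) : ∃ g : X →ₗ[A] Z, f = π ∘ₗ g := by
  obtain ⟨F⟩ := hf
  let := F.acg; let := F.mod; have := F.proj
  obtain ⟨l, hl⟩ := Module.projective_lifting_property π F.h hπ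
  exact ⟨l ∘ₗ F.g, by rw [← LinearMap.comp_assoc, hl]; exact F.fac⟩

theorem mem_span_factorsThroughProjective_iff {k : Type*} [CommSemiring k] [Algebra k A]
    [Module k Y] [IsScalarTower k A Y] [Module k P] [IsScalarTower k A P] [Module.Projective A P]
    {π : P →ₗ[A] Y} (hπ : Function.Surjective π) (f : X →ₗ[A] Y) :
    f ∈ Submodule.span k {f : X →ₗ[A] Y | FactorsThroughProjective A f} ↔
      ∃ g : X →ₗ[A] P, f = π ∘ₗ g := by
  refine ⟨fun hf => ?_, fun ⟨g, hg⟩ =>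
    Submodule.subset_span (hg ▸ factorsThroughProjective_comp g π)⟩
  induction hf using Submodule.span_induction with
  | mem f hf => exact hf.exists_eq_comp hπ
  | zero => exact ⟨0, (LinearMap.comp_zero π).symm⟩
  | add f₁ f₂ _ _ h₁ h₂ =>
    obtain ⟨g₁, rfl⟩ := h₁
    obtain ⟨g₂, rfl⟩ := h₂
    exact ⟨g₁ + g₂, (LinearMap.comp_add _ _ _).symm⟩
  | smul c f _ h =>
    obtain ⟨g, rfl⟩ := h
    exact ⟨c • g, by ext; simp⟩

end FactorsThroughProjective

section SpanSingleton

open Submodule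

variable {k A : Type*} [CommSemiring k] [Semiring A] [Algebra k A]

theorem mem_span_singleton_op_iff {a z : A} : z ∈ span Aᵐᵒᵖ {a} ↔ ∃ x, a * x = z :=
  mem_span_singleton.trans ⟨fun ⟨r, hr⟩ => ⟨r.unop, hr⟩, fun ⟨x, hx⟩ => ⟨.op x, hx⟩⟩

theorem mem_span_mul_mul_iff (a b z : A) :
    z ∈ span k {z : A | ∃ x : A, z = a * x * b} ↔ ∃ x, z = a * x * b := by
  have : {z : A | ∃ x : A, z = a * x * b} = LinearMap.range (LinearMap.mulLeftRight k (a, b)) := by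
    ext z
    simp [eq_comm]
  rw [this, span_eq, LinearMap.mem_range]
  simp [eq_comm]

def mulRightToSpan (b : A) : A →ₗ[A] span A {b} :=
  (LinearMap.toSpanSingleton A A b).codRestrict _ fun x => smul_mem _ x (mem_span_singleton_self b)

@[simp]
theorem mulRightToSpan_apply (b x : A) : (mulRightToSpan b x : A) = x * b := rfl

theorem mulRightToSpan_surjective (b : A) : Function.Surjective (mulRightToSpan b) := by
  rintro ⟨y, hy⟩
  obtain ⟨d, rfl⟩ := mem_span_singleton.1 hy
  exact ⟨d, rfl⟩

end SpanSingleton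

section Theta

open Submodule

variable {k : Type u} {A : Type v} [CommRing k] [Ring A] [Algebra k A]

def IsThetaMap (a : A) (θ : span Aᵐᵒᵖ {a} →ₗ[Aᵐᵒᵖ] (span A {a} →ₗ[A] A)) : Prop :=
  ∀ (x : A) (hx : a * x ∈ span Aᵐᵒᵖ {a}) (y : span A {a}), θ ⟨a * x, hx⟩ y = (y : A) * x

namespace IsThetaMap

variable {a : A} {θ : span Aᵐᵒᵖ {a} →ₗ[Aᵐᵒᵖ] (span A {a} →ₗ[A] A)} (hθ : IsThetaMap a θ)
include hθ

theorem apply_eq {d : A} (z : span Aᵐᵒᵖ {a}) (y : span A {a}) (hy : d * a = y) :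
    θ z y = d * z := by
  obtain ⟨_, hz⟩ := z
  obtain ⟨x, rfl⟩ := mem_span_singleton_op_iff.1 hz
  rw [hθ, ← hy, mul_assoc]

theorem apply_mem_span {b : A} (z : span Aᵐᵒᵖ {a}) (hz : (z : A) ∈ span A {b})
    (y : span A {a}) : θ z y ∈ span A {b} := by
  obtain ⟨d, hd⟩ := mem_span_singleton.1 y.2
  rw [hθ.apply_eq z y hd]
  exact smul_mem _ d hz

variable (k) in
def restrictInter (b : A) :
    ↥((span Aᵐᵒᵖ {a}).restrictScalars k ⊓ (span A {b}).restrictScalars k) →ₗ[k]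
      (span A {a} →ₗ[A] span A {b}) where
  toFun z := (θ ⟨z, z.2.1⟩).codRestrict _ (hθ.apply_mem_span _ z.2.2)
  map_add' z w := by
    ext y
    obtain ⟨d, hd⟩ := mem_span_singleton.1 y.2
    simp [hθ.apply_eq _ y hd, mul_add]
  map_smul' c z := by
    ext y
    obtain ⟨d, hd⟩ := mem_span_singleton.1 y.2
    simp [hθ.apply_eq _ y hd]

@[simp]
theorem restrictInter_apply (b : A) (z) (y : span A {a}) :
    (hθ.restrictInter k b z y : A) = θ ⟨z, z.2.1⟩ y :=
  rfl

theorem apply_self (z : span Aᵐᵒᵖ {a}) : θ z ⟨a, mem_span_singleton_self a⟩ = z :=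
  (hθ.apply_eq z _ (one_mul a)).trans (one_mul _)

theorem restrictInter_surjective (hsurj : Function.Surjective θ) (b : A) :
    Function.Surjective (hθ.restrictInter k b) := by
  intro f
  obtain ⟨w, hw⟩ := hsurj ((span A {b}).subtype ∘ₗ f)
  have hwb : (w : A) ∈ span A {b} := by
    rw [← hθ.apply_self w, hw]
    exact (f _).2
  exact ⟨⟨w, w.2, hwb⟩, LinearMap.ext fun y => Subtype.ext (LinearMap.congr_fun hw y)⟩

theorem restrictInter_mem_span_iff (hsurj : Function.Surjective θ) (b : A) (z) :
    hθ.restrictInter k b z ∈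
        span k {f : span A {a} →ₗ[A] span A {b} | FactorsThroughProjective A f} ↔
      ∃ x, (z : A) = a * x * b := by
  rw [mem_span_factorsThroughProjective_iff (mulRightToSpan_surjective b)]
  constructor
  · rintro ⟨g, hg⟩
    obtain ⟨w, rfl⟩ := hsurj g
    obtain ⟨x, hx⟩ := mem_span_singleton_op_iff.1 w.2
    have hz := congr(($hg ⟨a, mem_span_singleton_self a⟩ : A))
    simp only [restrictInter_apply, hθ.apply_self, LinearMap.comp_apply,
      mulRightToSpan_apply] at hz
    exact ⟨x, by rw [hz, ← hx]⟩
  · rintro ⟨x, hz⟩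
    refine ⟨θ ⟨a * x, mem_span_singleton_op_iff.2 ⟨x, rfl⟩⟩,
      LinearMap.ext fun y => Subtype.ext ?_⟩
    obtain ⟨d, hd⟩ := mem_span_singleton.1 y.2
    simp [hθ.apply_eq _ y hd, hz, mul_assoc]

theorem ker_mkQ_comp_restrictInter (hsurj : Function.Surjective θ) (b : A) :
    LinearMap.ker ((span k {f : span A {a} →ₗ[A] span A {b} |
        FactorsThroughProjective A f}).mkQ ∘ₗ hθ.restrictInter k b) =
      comap ((span Aᵐᵒᵖ {a}).restrictScalars k ⊓ (span A {b}).restrictScalars k).subtype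
        (span k {z : A | ∃ x : A, z = a * x * b}) := by
  ext z
  simp only [LinearMap.mem_ker, LinearMap.comp_apply, mkQ_apply, Quotient.mk_eq_zero,
    hθ.restrictInter_mem_span_iff hsurj, mem_comap, subtype_apply, mem_span_mul_mul_iff]

end IsThetaMap

end Theta

theorem theta_induces_stable_hom_iso_general (k : Type u) (A : Type v) [Field k] [Ring A]
    [Algebra k A] (a b : A)
    (θ : (Submodule.span Aᵐᵒᵖ ({a} : Set A)) →ₗ[Aᵐᵒᵖ]
        ((Submodule.span A ({a} : Set A)) →ₗ[A] A))
    (hθ : ∀ (x : A) (hx : a * x ∈ Submodule.span Aᵐᵒᵖ ({a} : Set A))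
        (y : Submodule.span A ({a} : Set A)), θ ⟨a * x, hx⟩ y = (y : A) * x)
    (hbij : Function.Bijective θ) :
    ∃ Φ : (↥((Submodule.span Aᵐᵒᵖ ({a} : Set A)).restrictScalars k ⊓
            (Submodule.span A ({b} : Set A)).restrictScalars k) ⧸
          (Submodule.comap
            ((Submodule.span Aᵐᵒᵖ ({a} : Set A)).restrictScalars k ⊓
              (Submodule.span A ({b} : Set A)).restrictScalars k).subtype
            (Submodule.span k {z : A | ∃ x : A, z = a * x * b}))) ≃ₗ[k]
        (((Submodule.span A ({a} : Set A)) →ₗ[A] (Submodule.span A ({b} : Set A))) ⧸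
          (Submodule.span k
            {f : (Submodule.span A ({a} : Set A)) →ₗ[A] (Submodule.span A ({b} : Set A)) |
              FactorsThroughProjective A f})),
      ∀ (x : A)
        (hmem : a * x ∈ (Submodule.span Aᵐᵒᵖ ({a} : Set A)).restrictScalars k ⊓
          (Submodule.span A ({b} : Set A)).restrictScalars k)
        (f : (Submodule.span A ({a} : Set A)) →ₗ[A] (Submodule.span A ({b} : Set A))),
        (∀ y : Submodule.span A ({a} : Set A), ((f y : A) = (y : A) * x)) →
        Φ (Submodule.Quotient.mk ⟨a * x, hmem⟩) = Submodule.Quotient.mk f := by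
  have hθ' : IsThetaMap a θ := hθ
  let Φ₀ := (Submodule.span k {f : (Submodule.span A ({a} : Set A)) →ₗ[A]
      (Submodule.span A ({b} : Set A)) | FactorsThroughProjective A f}).mkQ ∘ₗ
    hθ'.restrictInter k b
  have hΦ₀ : Function.Surjective Φ₀ :=
    (Submodule.mkQ_surjective _).comp (hθ'.restrictInter_surjective hbij.2 b)
  refine ⟨(Submodule.quotEquivOfEq _ _ (hθ'.ker_mkQ_comp_restrictInter hbij.2 b).symm).trans
    (Φ₀.quotKerEquivOfSurjective hΦ₀), fun x hmem f hf => ?_⟩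
  have hax : hθ'.restrictInter k b ⟨a * x, hmem⟩ = f :=
    LinearMap.ext fun y => Subtype.ext ((hθ x hmem.1 y).trans (hf y).symm)
  simp [Φ₀, hax]

/-- If `θ_a : aA → Hom_A(Aa, A)` is an isomorphism, then it induces a `k`-linear
isomorphism `(aA ∩ Ab)/(aAb) ≅ Hom-underline_A(Aa, Ab)`, the quotient of
`Hom_A(Aa, Ab)` by the homomorphisms factoring through a projective module. -/
theorem theta_induces_stable_hom_iso (k : Type u) (A : Type v) [Field k] [Ring A]
    [Algebra k A] [FiniteDimensional k A] (a b : A)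
    (θ : (Submodule.span Aᵐᵒᵖ ({a} : Set A)) →ₗ[Aᵐᵒᵖ]
        ((Submodule.span A ({a} : Set A)) →ₗ[A] A))
    (hθ : ∀ (x : A) (hx : a * x ∈ Submodule.span Aᵐᵒᵖ ({a} : Set A))
        (y : Submodule.span A ({a} : Set A)), θ ⟨a * x, hx⟩ y = (y : A) * x)
    (hbij : Function.Bijective θ) :
    ∃ Φ : (↥((Submodule.span Aᵐᵒᵖ ({a} : Set A)).restrictScalars k ⊓
            (Submodule.span A ({b} : Set A)).restrictScalars k) ⧸
          (Submodule.comap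
            ((Submodule.span Aᵐᵒᵖ ({a} : Set A)).restrictScalars k ⊓
              (Submodule.span A ({b} : Set A)).restrictScalars k).subtype
            (Submodule.span k {z : A | ∃ x : A, z = a * x * b}))) ≃ₗ[k]
        (((Submodule.span A ({a} : Set A)) →ₗ[A] (Submodule.span A ({b} : Set A))) ⧸
          (Submodule.span k
            {f : (Submodule.span A ({a} : Set A)) →ₗ[A] (Submodule.span A ({b} : Set A)) |
              FactorsThroughProjective A f})),
      ∀ (x : A)
        (hmem : a * x ∈ (Submodule.span Aᵐᵒᵖ ({a} : Set A)).restrictScalars k ⊓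
          (Submodule.span A ({b} : Set A)).restrictScalars k)
        (f : (Submodule.span A ({a} : Set A)) →ₗ[A] (Submodule.span A ({b} : Set A))),
        (∀ y : Submodule.span A ({a} : Set A), ((f y : A) = (y : A) * x)) →
        Φ (Submodule.Quotient.mk ⟨a * x, hmem⟩) = Submodule.Quotient.mk f :=
  theta_induces_stable_hom_iso_general k A a b θ hθ hbij
end

section
/- Let A be a finite-dimensional algebra, a ∈ A with θ_a : aA → Hom_A(Aa, A) an isomorphism, and K ⊆ A a left ideal. Then θ_a restricts to an isomorphism aA ∩ K ≅ Hom_A(Aa, K), where Hom_A(Aa, K) is identified with the subspace of Hom_A(Aa, A) consisting of homomorphisms with image contained in K. -/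
universe u v

/-- If `θ_a : aA → Hom_A(Aa, A)` is an isomorphism and `K ⊆ A` is a left ideal, then
`θ_a` restricts to an isomorphism `aA ∩ K ≅ Hom_A(Aa, K)`, the latter identified with
the subspace of `Hom_A(Aa, A)` of homomorphisms with image contained in `K`. -/
theorem theta_restricts_to_ideal (k : Type u) (A : Type v) [Field k] [Ring A]
    [Algebra k A] [FiniteDimensional k A] (a : A)
    (θ : (Submodule.span Aᵐᵒᵖ ({a} : Set A)) →ₗ[Aᵐᵒᵖ]
        ((Submodule.span A ({a} : Set A)) →ₗ[A] A))
    (hθ : ∀ (x : A) (hx : a * x ∈ Submodule.span Aᵐᵒᵖ ({a} : Set A))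
        (y : Submodule.span A ({a} : Set A)), θ ⟨a * x, hx⟩ y = (y : A) * x)
    (hbij : Function.Bijective θ) (K : Submodule A A) :
    ∃ Θ : {z : Submodule.span Aᵐᵒᵖ ({a} : Set A) // (z : A) ∈ K} →
        {f : (Submodule.span A ({a} : Set A)) →ₗ[A] A //
          ∀ y : Submodule.span A ({a} : Set A), f y ∈ K},
      (∀ z, (Θ z : (Submodule.span A ({a} : Set A)) →ₗ[A] A) = θ z.1) ∧
      Function.Bijective Θ := by
  have ha : a ∈ Submodule.span A ({a} : Set A) := Submodule.mem_span_singleton_self a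
  -- every element of aA is of the form a * x, and θ evaluates as y ↦ y * x
  have key : ∀ z : Submodule.span Aᵐᵒᵖ ({a} : Set A), ∃ x : A,
      (z : A) = a * x ∧ ∀ y : Submodule.span A ({a} : Set A), θ z y = (y : A) * x := by
    intro z
    obtain ⟨r, hr⟩ := Submodule.mem_span_singleton.mp z.2
    refine ⟨r.unop, ?_, ?_⟩
    · rw [← hr]; rfl
    · intro y
      have he : a * r.unop = (z : A) := by rw [← hr]; rfl
      have hz : z = ⟨a * r.unop, he ▸ z.2⟩ := Subtype.ext he.symm
      rw [hz, hθ]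
  -- images of elements of K land in K
  have mem : ∀ z : Submodule.span Aᵐᵒᵖ ({a} : Set A), (z : A) ∈ K →
      ∀ y : Submodule.span A ({a} : Set A), θ z y ∈ K := by
    intro z hz y
    obtain ⟨x, hzx, hev⟩ := key z
    obtain ⟨c, hc⟩ := Submodule.mem_span_singleton.mp y.2
    rw [hev]
    have : (y : A) * x = c • (z : A) := by
      rw [← hc, hzx]; simp [mul_assoc]
    rw [this]
    exact K.smul_mem c hz
  refine ⟨fun z => ⟨θ z.1, mem z.1 z.2⟩, fun z => rfl, ?_, ?_⟩
  · intro z₁ z₂ h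
    have := Subtype.ext_iff.mp h
    exact Subtype.ext (hbij.1 this)
  · rintro ⟨f, hf⟩
    obtain ⟨z, hz⟩ := hbij.2 f
    have hzK : (z : A) ∈ K := by
      obtain ⟨x, hzx, hev⟩ := key z
      have := hf ⟨a, ha⟩
      rw [← hz, hev] at this
      rwa [hzx]
    exact ⟨⟨z, hzK⟩, Subtype.ext hz⟩
end

section
/- Let A = kQ/I be a monomial algebra and p a nonzero nontrivial path in A. Then there is a short exact sequence of left A-modules 0 → ⊕_{q ∈ L(p)} Aq → Ae_{t(p)} → Ap → 0, where the first map is the inclusion and the second sends e_{t(p)} to p; moreover Ae_{t(p)} → Ap is a projective cover. -/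
universe u v w

/-- A presentation of the `k`-algebra `A` as a monomial algebra `kQ/I` on the quiver
with vertex type `V`: `ι` sends each path of `Q` to its canonical image in `A`
(with `ι (p.comp q) = ι q * ι p`, so that the paper's concatenation `pq`, defined when
`s(p) = t(q)`, corresponds to the product `ι p * ι q`), and `Z p` means `p ∈ I`. -/
structure MonomialPresentation (k : Type u) (A : Type v) (V : Type w)
    [Field k] [Ring A] [Algebra k A] [Quiver.{w} V] [Fintype V] : Type (max u v w) where
  ι : ∀ {i j : V}, Quiver.Path i j → A
  Z : ∀ {i j : V}, Quiver.Path i j → Prop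
  zero_iff : ∀ {i j : V} (p : Quiver.Path i j), ι p = 0 ↔ Z p
  mul_comp : ∀ {i j l : V} (p : Quiver.Path i j) (q : Quiver.Path j l),
    ι (p.comp q) = ι q * ι p
  orth : ∀ i j : V, i ≠ j →
    ι (Quiver.Path.nil : Quiver.Path i i) * ι (Quiver.Path.nil : Quiver.Path j j) = 0
  sum_one : (∑ i : V, ι (Quiver.Path.nil : Quiver.Path i i)) = 1
  len_two : ∀ {i j : V} (p : Quiver.Path i j), Z p → 2 ≤ p.length
  admissible : ∃ d : ℕ, ∀ {i j : V} (p : Quiver.Path i j), d ≤ p.length → Z p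
  z_mul : ∀ {i j l : V} (p : Quiver.Path i j) (q : Quiver.Path j l),
    Z p ∨ Z q → Z (p.comp q)
  indep : LinearIndependent k
    (fun x : {y : Σ i j : V, Quiver.Path i j // ¬ Z y.2.2} => ι x.1.2.2)
  span_top : Submodule.span k
    (Set.range (fun x : Σ i j : V, Quiver.Path i j => ι x.2.2)) = ⊤

/-- The type of paths of a quiver, bundled with their endpoints. -/
abbrev PathIn (V : Type w) [Quiver.{w} V] : Type w := Σ i j : V, Quiver.Path i j

/-- The type of arrows of a quiver, bundled with their endpoints. -/
abbrev ArrowIn (V : Type w) [Quiver.{w} V] : Type w := Σ i j : V, (i ⟶ j)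

/-- `x` is a sub-path of `y`. -/
def IsSubpathIn {V : Type w} [Quiver.{w} V] (x y : PathIn V) : Prop :=
  ∃ (r : Quiver.Path y.1 x.1) (s : Quiver.Path x.2.1 y.2.1),
    y.2.2 = (r.comp x.2.2).comp s

namespace MonomialPresentation

variable {k : Type u} {A : Type v} {V : Type w}
  [Field k] [Ring A] [Algebra k A] [Quiver.{w} V] [Fintype V]
  (P : MonomialPresentation k A V)

/-- `L(p)`: the right-minimal paths `q` among the nonzero paths with
`s(q) = t(p)` and `qp = 0` in `A`. -/
def LSet {i j : V} (p : Quiver.Path i j) : Set (PathIn V) :=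
  {q | ¬ P.Z q.2.2 ∧ q.1 = j ∧ P.ι q.2.2 * P.ι p = 0 ∧
    ¬ ∃ r u : PathIn V, ¬ P.Z r.2.2 ∧ r.1 = j ∧ P.ι r.2.2 * P.ι p = 0 ∧
      1 ≤ u.2.2.length ∧ P.ι q.2.2 = P.ι u.2.2 * P.ι r.2.2}

/-- `R(p)`: the left-minimal paths `q` among the nonzero paths with
`t(q) = s(p)` and `pq = 0` in `A`. -/
def RSet {i j : V} (p : Quiver.Path i j) : Set (PathIn V) :=
  {q | ¬ P.Z q.2.2 ∧ q.2.1 = i ∧ P.ι p * P.ι q.2.2 = 0 ∧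
    ¬ ∃ r u : PathIn V, ¬ P.Z r.2.2 ∧ r.2.1 = i ∧ P.ι p * P.ι r.2.2 = 0 ∧
      1 ≤ u.2.2.length ∧ P.ι q.2.2 = P.ι r.2.2 * P.ι u.2.2}

/-- A perfect pair `(p, q)` of nonzero nontrivial paths with `s(p) = t(q)`:
`pq = 0`, `R(p) = {q}` and `L(q) = {p}`. -/
def PerfectPair {i j l : V} (p : Quiver.Path i j) (q : Quiver.Path l i) : Prop :=
  1 ≤ p.length ∧ 1 ≤ q.length ∧ ¬ P.Z p ∧ ¬ P.Z q ∧ P.Z (q.comp p) ∧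
  (∀ (m : V) (q' : Quiver.Path m i), ¬ P.Z q' → P.Z (q'.comp p) →
    ∃ x : Quiver.Path m l, q' = x.comp q) ∧
  (∀ (m : V) (p' : Quiver.Path i m), ¬ P.Z p' → P.Z (q.comp p') →
    ∃ y : Quiver.Path j m, p' = p.comp y)

/-- The perfect pair relation on bundled paths. -/
def PerfectPairS (x y : PathIn V) : Prop :=
  ∃ (i j l : V) (p : Quiver.Path i j) (q : Quiver.Path l i),
    x = ⟨i, j, p⟩ ∧ y = ⟨l, i, q⟩ ∧ P.PerfectPair p q

/-- A perfect path: a nonzero path `p` admitting a sequence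
`p = p₁, p₂, …, pₙ, pₙ₊₁ = p` in which all consecutive pairs are perfect. -/
def IsPerfectPath (x : PathIn V) : Prop :=
  ∃ (n : ℕ) (c : Fin (n + 2) → PathIn V), c 0 = x ∧ c (Fin.last (n + 1)) = x ∧
    ∀ m : Fin (n + 1), P.PerfectPairS (c m.castSucc) (c m.succ)

/-- `x ∈ F`: `x` is a minimal path contained in the ideal `I`. -/
def InF (x : PathIn V) : Prop :=
  P.Z x.2.2 ∧ ∀ y : PathIn V, IsSubpathIn y x → y ≠ x → ¬ P.Z y.2.2

/-- The algebra is quadratic monomial: all minimal relations have length two. -/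
def Quadratic : Prop := ∀ x : PathIn V, P.InF x → x.2.2.length = 2

/-- The arrow relation of the relation quiver `R_A`: there is an arrow
`α → β` when `t(α) = s(β)` and `βα ∈ F`. -/
def RQ (x y : ArrowIn V) : Prop :=
  ∃ (i j l : V) (α : i ⟶ j) (β : j ⟶ l), x = ⟨i, j, α⟩ ∧ y = ⟨j, l, β⟩ ∧
    P.InF ⟨i, l, (α.toPath).comp β.toPath⟩

/-- The two vertices of the relation quiver lie in the same connected component. -/
def Conn (x y : ArrowIn V) : Prop :=
  Relation.ReflTransGen (fun a b => P.RQ a b ∨ P.RQ b a) x y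

/-- The connected component of `x` in the relation quiver is a basic cycle:
every vertex of the component has a unique successor and a unique predecessor. -/
def InPerfectComponent (x : ArrowIn V) : Prop :=
  ∀ y : ArrowIn V, P.Conn x y → (∃! z, P.RQ y z) ∧ (∃! z, P.RQ z y)

/-- The connected component of `x` in the relation quiver contains no oriented cycle. -/
def InAcyclicComponent (x : ArrowIn V) : Prop :=
  ∀ y : ArrowIn V, P.Conn x y → ¬ Relation.TransGen P.RQ y y

end MonomialPresentation

/-- The quiver is a basic `n`-cycle. -/
def IsBasicCycleQuiver (V : Type w) [Quiver.{w} V] : Prop :=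
  ∃ n : ℕ, 0 < n ∧ ∃ f : V ≃ ZMod n,
    (∀ i j : V, Nonempty (i ⟶ j) ↔ f j = f i + 1) ∧
    (∀ (i j : V) (a b : i ⟶ j), a = b)

/-- The underlying graph of the quiver is connected. -/
def QuiverConnected (V : Type w) [Quiver.{w} V] : Prop :=
  Nonempty V ∧ ∀ i j : V,
    Relation.ReflTransGen (fun a b => Nonempty (a ⟶ b) ∨ Nonempty (b ⟶ a)) i j

/-- The quiver has no sources. -/
def NoSources (V : Type w) [Quiver.{w} V] : Prop := ∀ j : V, ∃ i : V, Nonempty (i ⟶ j)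

/-- The quiver has no sinks. -/
def NoSinks (V : Type w) [Quiver.{w} V] : Prop := ∀ i : V, ∃ j : V, Nonempty (i ⟶ j)

/-! `A` has the nonzero paths as a basis, and a product of two paths is their concatenation or
zero. Right multiplication by `p` therefore sends the paths `w` with `wp ≠ 0` injectively to
nonzero paths, so its kernel is spanned by the paths `w` with `wp = 0`; by induction on the
length, each of them is `u q` with `q ∈ L(p)`. The ideal `Aq` is spanned by the paths
beginning with `q`, and these sets are disjoint for distinct `q ∈ L(p)` because no element of
`L(p)` is a proper initial segment of another; this gives the direct sum.
Since `e = e_{t(p)}` is idempotent, `Ae` is a direct summand of `A`. As `p ≠ 0`, the kernel lies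
in the nilpotent arrow ideal, so if `e = n + m` with `m` in the kernel, then `n = (1 - m) e` is a
unit multiple of `e`: the kernel is superfluous. -/

open Function Submodule

theorem Quiver.Path.exists_eq_comp_of_comp_eq_comp {V : Type*} [Quiver V] {a b c : V}
    (q : Quiver.Path a b) :
    ∀ {l : V} (u : Quiver.Path b l) (q' : Quiver.Path a c) (u' : Quiver.Path c l),
      q.comp u = q'.comp u' →
      (∃ v : Quiver.Path b c, q' = q.comp v) ∨ (∃ v : Quiver.Path c b, q = q'.comp v)
  | _, .nil, _, u', h => .inr ⟨u', h⟩
  | _, .cons u e, q', .nil, h => .inl ⟨u.cons e, h.symm⟩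
  | _, .cons u e, q', .cons u' e', h => by
    obtain rfl := Quiver.Path.obj_eq_of_cons_eq_cons h
    exact exists_eq_comp_of_comp_eq_comp q u q' u'
      (eq_of_heq (Quiver.Path.heq_of_cons_eq_cons h))

theorem Quiver.Path.sigma_eq_of_comp_eq_comp {V : Type*} [Quiver V] {a b c c' : V}
    (p : Quiver.Path a b) {u : Quiver.Path b c} {u' : Quiver.Path b c'}
    (h : (⟨c, p.comp u⟩ : Σ d, Quiver.Path a d) = ⟨c', p.comp u'⟩) :
    (⟨c, u⟩ : Σ d, Quiver.Path b d) = ⟨c', u'⟩ := by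
  obtain ⟨rfl, h⟩ := Sigma.mk.inj_iff.1 h
  rw [p.comp_injective_right (eq_of_heq h)]

theorem LinearMap.ker_eq_span_image_of_linearIndependent {R M N ι : Type*} [Ring R]
    [AddCommGroup M] [AddCommGroup N] [Module R M] [Module R N] {v : ι → M}
    (hv : span R (Set.range v) = ⊤) (f : M →ₗ[R] N) {s : Set ι}
    (hs : ∀ i ∈ s, f (v i) = 0)
    (hind : LinearIndependent R fun i : ↥sᶜ => f (v i)) :
    LinearMap.ker f = span R (v '' s) := by
  have hle : span R (v '' s) ≤ LinearMap.ker f := span_le.2 (Set.image_subset_iff.2 hs)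
  refine le_antisymm (fun x hx => ?_) hle
  obtain ⟨y, hy, z, hz, rfl⟩ := mem_sup.1 <|
    (codisjoint_span_image_of_codisjoint hv isCompl_compl.codisjoint).eq_top ▸ mem_top (x := x)
  have hfz : z ∈ LinearMap.ker f := by
    simpa [LinearMap.mem_ker.1 (hle hy)] using hx
  rw [Set.image_eq_range] at hz
  rw [disjoint_def.1 (range_ker_disjoint (f := f) hind) z hz hfz, add_zero]
  exact hy

theorem LinearIndependent.iSupIndep_span_image {R M ι κ : Type*} [Ring R] [AddCommGroup M]
    [Module R M] {v : ι → M} (hv : LinearIndependent R v) {t : κ → Set ι}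
    (ht : Pairwise (Disjoint on t)) : iSupIndep fun a => span R (v '' t a) := by
  refine iSupIndep_def.2 fun a => ?_
  simp_rw [← span_iUnion, ← Set.image_iUnion]
  exact hv.disjoint_span_image <|
    Set.disjoint_iUnion_right.2 fun _ => Set.disjoint_iUnion_right.2 fun hb => ht hb.symm

theorem iSupIndep.of_restrictScalars {S R M κ : Type*} [Semiring S] [Semiring R]
    [AddCommMonoid M] [Module S M] [Module R M] [SMul S R] [IsScalarTower S R M]
    {N : κ → Submodule R M}
    (h : iSupIndep fun a => (N a).restrictScalars S) : iSupIndep N := by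
  refine iSupIndep_def.2 fun a => ?_
  rw [← disjoint_restrictScalars_iff S]
  simpa only [restrictScalars_iSup] using iSupIndep_def.1 h a

theorem IsIdempotentElem.mul_eq_self_of_mem_span_singleton {R : Type*} [Ring R] {e x : R}
    (he : IsIdempotentElem e) (hx : x ∈ span R {e}) : x * e = x := by
  obtain ⟨a, rfl⟩ := mem_span_singleton.1 hx
  rw [smul_eq_mul, mul_assoc, he.eq]

theorem IsIdempotentElem.projective_span_singleton {R : Type*} [Ring R] {e : R}
    (he : IsIdempotentElem e) : Module.Projective R (span R {e}) := by
  refine .of_split (span R {e}).subtype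
    ((LinearMap.toSpanSingleton R R e).codRestrict _ fun r => mem_span_singleton.2 ⟨r, rfl⟩) ?_
  ext x
  exact he.mul_eq_self_of_mem_span_singleton x.2

theorem IsIdempotentElem.eq_top_of_sup_eq_top {R : Type*} [Ring R] {e : R}
    (he : IsIdempotentElem e) {N K : Submodule R (span R {e})}
    (hK : ∀ m ∈ K, IsNilpotent (m : R)) (h : N ⊔ K = ⊤) : N = ⊤ := by
  set e' : span R {e} := ⟨e, mem_span_singleton_self e⟩
  obtain ⟨n, hn, m, hm, hnm⟩ := mem_sup.1 (h ▸ mem_top (x := e'))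
  -- `e - m = (1 - m) e` is a unit multiple of `e` because `m` is nilpotent
  have hn' : (1 - (m : R)) * e = n := by
    rw [sub_mul, one_mul, he.mul_eq_self_of_mem_span_singleton m.2, sub_eq_iff_eq_add]
    exact (congrArg Subtype.val hnm).symm
  obtain ⟨u, hu⟩ := (hK m hm).isUnit_one_sub
  have heN : e' ∈ N := by
    convert N.smul_mem (↑u⁻¹ : R) hn
    refine Subtype.ext ?_
    rw [coe_smul, ← hn', ← hu, smul_eq_mul, ← mul_assoc, Units.inv_mul, one_mul]
  refine eq_top_iff.2 fun x _ => ?_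
  obtain ⟨a, ha⟩ := mem_span_singleton.1 x.2
  rw [show x = a • e' from Subtype.ext ha.symm]
  exact N.smul_mem a heN

/-- The paths `u x`, in the paper's notation. -/
def pathExtensions {V : Type w} [Quiver.{w} V] (x : PathIn V) : Set (PathIn V) :=
  {y | ∃ (l : V) (u : Quiver.Path x.2.1 l), y = ⟨x.1, l, x.2.2.comp u⟩}

namespace MonomialPresentation

open Quiver

variable {k : Type u} {A : Type v} {V : Type w}
  [Field k] [Ring A] [Algebra k A] [Quiver.{w} V] [Fintype V]
  (P : MonomialPresentation k A V)

lemma ι_mul_nil {a b : V} (x : Path a b) : P.ι x * P.ι (Path.nil : Path a a) = P.ι x := by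
  rw [← P.mul_comp, Path.nil_comp]

lemma nil_mul_ι {a b : V} (x : Path a b) : P.ι (Path.nil : Path b b) * P.ι x = P.ι x := by
  rw [← P.mul_comp, Path.comp_nil]

lemma isIdempotentElem_ι_nil (j : V) : IsIdempotentElem (P.ι (Path.nil : Path j j)) :=
  P.ι_mul_nil _

lemma ι_mul_ι_of_ne {a b c d : V} (x : Path a b) (y : Path c d) (h : a ≠ d) :
    P.ι x * P.ι y = 0 := by
  rw [← P.ι_mul_nil x, ← P.nil_mul_ι y, mul_assoc,
    ← mul_assoc (P.ι (Path.nil : Path a a)), P.orth a d h,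
    zero_mul, mul_zero]

lemma eq_of_ι_mul_ι_ne_zero {a b c d : V} {x : Path a b} {y : Path c d}
    (h : P.ι x * P.ι y ≠ 0) : a = d :=
  by_contra fun hne => h (P.ι_mul_ι_of_ne x y hne)

lemma eq_of_ι_eq {x y : PathIn V} (hx : ¬ P.Z x.2.2) (h : P.ι x.2.2 = P.ι y.2.2) : x = y := by
  have hy : ¬ P.Z y.2.2 := by rwa [← P.zero_iff, ← h, P.zero_iff]
  exact congrArg Subtype.val (P.indep.injective (a₁ := ⟨x, hx⟩) (a₂ := ⟨y, hy⟩) h)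

def lengthGESpan (n : ℕ) : Submodule k A :=
  span k {a | ∃ w : PathIn V, n ≤ w.2.2.length ∧ a = P.ι w.2.2}

lemma lengthGESpan_antitone {m n : ℕ} (h : m ≤ n) : P.lengthGESpan n ≤ P.lengthGESpan m :=
  span_mono fun _ ⟨w, hw, ha⟩ => ⟨w, h.trans hw, ha⟩

lemma lengthGESpan_mul_le (m n : ℕ) :
    P.lengthGESpan m * P.lengthGESpan n ≤ P.lengthGESpan (m + n) := by
  rw [lengthGESpan, lengthGESpan, span_mul_span]
  refine span_le.2 ?_
  rintro _ ⟨_, ⟨⟨a, b, x⟩, hx, rfl⟩, _, ⟨⟨c, d, y⟩, hy, rfl⟩, rfl⟩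
  by_cases had : a = d
  · subst had
    dsimp only
    rw [← P.mul_comp]
    refine subset_span ⟨⟨c, b, y.comp x⟩, ?_, rfl⟩
    simp only [Path.length_comp] at hx hy ⊢
    omega
  · dsimp only
    rw [SetLike.mem_coe, P.ι_mul_ι_of_ne x y had]
    exact zero_mem _

lemma pow_lengthGESpan_one_le (n : ℕ) : P.lengthGESpan 1 ^ n ≤ P.lengthGESpan n := by
  induction n with
  | zero =>
    rw [pow_zero, Submodule.one_le, ← P.sum_one]
    exact sum_mem fun a _ => subset_span ⟨⟨a, a, Path.nil⟩, le_rfl, rfl⟩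
  | succ n ih =>
    rw [pow_succ]
    exact (mul_le_mul' ih le_rfl).trans (P.lengthGESpan_mul_le n 1)

lemma exists_lengthGESpan_eq_bot : ∃ d, P.lengthGESpan d = ⊥ := by
  obtain ⟨d, hd⟩ := P.admissible
  refine ⟨d, (span_eq_bot).2 ?_⟩
  rintro _ ⟨w, hw, rfl⟩
  exact (P.zero_iff _).2 (hd _ hw)

lemma isNilpotent_of_mem_lengthGESpan_one {a : A} (ha : a ∈ P.lengthGESpan 1) :
    IsNilpotent a := by
  obtain ⟨d, hd⟩ := P.exists_lengthGESpan_eq_bot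
  refine ⟨d, (mem_bot k).1 ?_⟩
  rw [← hd]
  exact P.pow_lengthGESpan_one_le d (pow_mem_pow _ ha d)

lemma ι_mem_span_nonzero {s : Set (PathIn V)} {w : PathIn V} (hw : w ∈ s) :
    P.ι w.2.2 ∈ span k ((fun x : {y : PathIn V // ¬ P.Z y.2.2} => P.ι x.1.2.2) ''
      (Subtype.val ⁻¹' s)) := by
  by_cases hz : P.Z w.2.2
  · rw [(P.zero_iff _).2 hz]
    exact zero_mem _
  · exact subset_span ⟨⟨w, hz⟩, hw, rfl⟩

lemma restrictScalars_span_ι (q : PathIn V) :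
    (span A {P.ι q.2.2}).restrictScalars k =
      span k ((fun x : {y : PathIn V // ¬ P.Z y.2.2} => P.ι x.1.2.2) ''
        (Subtype.val ⁻¹' pathExtensions q)) := by
  obtain ⟨c, d, q⟩ := q
  refine le_antisymm (fun x hx => ?_) (span_le.2 ?_)
  · obtain ⟨a, rfl⟩ := mem_span_singleton.1 hx
    rw [smul_eq_mul]
    clear hx
    have ha : a ∈ span k (Set.range fun w : PathIn V => P.ι w.2.2) := by
      rw [P.span_top]; exact mem_top
    induction ha using span_induction with
    | mem _ hw =>
      obtain ⟨⟨a, b, w⟩, rfl⟩ := hw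
      by_cases ha : a = d
      · subst ha
        rw [← P.mul_comp]
        exact P.ι_mem_span_nonzero (s := pathExtensions ⟨c, _, q⟩) ⟨b, w, rfl⟩
      · rw [P.ι_mul_ι_of_ne w q ha]
        exact zero_mem _
    | zero => rw [zero_mul]; exact zero_mem _
    | add a b _ _ ha hb => rw [add_mul]; exact add_mem ha hb
    | smul r a _ ha => rw [smul_mul_assoc]; exact smul_mem _ r ha
  · rintro _ ⟨⟨_, _⟩, ⟨l, u, rfl⟩, rfl⟩
    dsimp only
    rw [SetLike.mem_coe, restrictScalars_mem, P.mul_comp]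
    exact mem_span_singleton.2 ⟨P.ι u, rfl⟩

lemma span_ι_le_lengthGESpan (q : PathIn V) :
    (span A {P.ι q.2.2}).restrictScalars k ≤ P.lengthGESpan q.2.2.length := by
  rw [restrictScalars_span_ι]
  refine span_le.2 ?_
  rintro _ ⟨⟨_, _⟩, ⟨l, u, rfl⟩, rfl⟩
  exact subset_span ⟨_, by simp [Path.length_comp], rfl⟩

variable {P} in
lemma eq_of_mem_LSet_of_comp_mem_LSet {i j b c : V} {p : Path i j} {q : Path j b}
    {v : Path b c} (hq : ⟨j, b, q⟩ ∈ P.LSet p) (hqv : ⟨j, c, q.comp v⟩ ∈ P.LSet p) :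
    (⟨j, b, q⟩ : PathIn V) = ⟨j, c, q.comp v⟩ := by
  cases v with
  | nil => rfl
  | cons v e =>
    exact (hqv.2.2.2 ⟨⟨j, b, q⟩, ⟨b, c, v.cons e⟩, hq.1, rfl, hq.2.2.1,
      by simp [Path.length_cons], P.mul_comp q _⟩).elim

variable {P} in
lemma disjoint_pathExtensions_of_mem_LSet {i j : V} {p : Path i j} {q q' : PathIn V}
    (hq : q ∈ P.LSet p) (hq' : q' ∈ P.LSet p) (hne : q ≠ q') :
    Disjoint (pathExtensions q) (pathExtensions q') := by
  obtain ⟨a, b, q⟩ := q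
  obtain ⟨a', b', q'⟩ := q'
  obtain rfl : a = j := hq.2.1
  obtain rfl : a' = a := hq'.2.1
  refine Set.disjoint_left.2 ?_
  rintro _ ⟨l, u, rfl⟩ ⟨l', u', h⟩
  obtain ⟨rfl, h⟩ := Sigma.mk.inj_iff.1 (eq_of_heq (Sigma.mk.inj_iff.1 h).2)
  rcases Path.exists_eq_comp_of_comp_eq_comp q u q' u' (eq_of_heq h) with
    ⟨v, rfl⟩ | ⟨v, rfl⟩
  · exact hne (eq_of_mem_LSet_of_comp_mem_LSet hq hq')
  · exact hne (eq_of_mem_LSet_of_comp_mem_LSet hq' hq).symm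

lemma iSupIndep_span_LSet {i j : V} (p : Path i j) :
    iSupIndep fun q : P.LSet p => span A {P.ι q.1.2.2} := by
  refine iSupIndep.of_restrictScalars (S := k) ?_
  simp_rw [restrictScalars_span_ι]
  refine P.indep.iSupIndep_span_image fun q q' hne => ?_
  exact (disjoint_pathExtensions_of_mem_LSet q.2 q'.2 (Subtype.coe_ne_coe.2 hne)).preimage _

lemma linearIndependent_mul_ι {i j : V} (p : Path i j) :
    LinearIndependent k fun w : ↥{w : PathIn V | P.ι w.2.2 * P.ι p = 0}ᶜ =>
      P.ι w.1.2.2 * P.ι p := by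
  refine .of_linearIndepOn_id_range ?_ (P.indep.linearIndepOn_id.mono ?_)
  · rintro ⟨⟨a, b, x⟩, hx : P.ι x * P.ι p ≠ 0⟩
      ⟨⟨a', b', x'⟩, hx' : P.ι x' * P.ι p ≠ 0⟩ h
    obtain rfl : a = j := P.eq_of_ι_mul_ι_ne_zero hx
    obtain rfl : a' = a := P.eq_of_ι_mul_ι_ne_zero hx'
    simp only [← P.mul_comp] at h hx
    have hpx : (⟨i, b, p.comp x⟩ : PathIn V) = ⟨i, b', p.comp x'⟩ :=
      P.eq_of_ι_eq (fun hz => hx ((P.zero_iff _).2 hz)) h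
    exact Subtype.ext (congrArg (Sigma.mk _)
      (Path.sigma_eq_of_comp_eq_comp p (eq_of_heq (Sigma.mk.inj_iff.1 hpx).2)))
  · rintro _ ⟨⟨⟨a, b, x⟩, hx : P.ι x * P.ι p ≠ 0⟩, rfl⟩
    obtain rfl : a = j := P.eq_of_ι_mul_ι_ne_zero hx
    rw [← P.mul_comp] at hx
    exact ⟨⟨⟨i, b, p.comp x⟩, fun hz => hx ((P.zero_iff _).2 hz)⟩, P.mul_comp p x⟩

lemma ker_mulRight_ι {i j : V} (p : Path i j) :
    LinearMap.ker (LinearMap.mulRight k (P.ι p)) =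
      span k ((fun w : PathIn V => P.ι w.2.2) '' {w | P.ι w.2.2 * P.ι p = 0}) :=
  LinearMap.ker_eq_span_image_of_linearIndependent P.span_top _ (fun _ hw => hw)
    (P.linearIndependent_mul_ι p)

lemma ι_mem_iSup_LSet {i j : V} (p : Path i j) {b : V} (w : Path j b)
    (hw : P.ι w * P.ι p = 0) : P.ι w ∈ ⨆ q ∈ P.LSet p, span A {P.ι q.2.2} := by
  induction h : w.length using Nat.strong_induction_on generalizing b w with
  | _ n ih =>
  by_cases hz : P.Z w
  · rw [(P.zero_iff w).2 hz]
    exact zero_mem _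
  by_cases hL : ⟨j, b, w⟩ ∈ P.LSet p
  · exact le_biSup (fun q : PathIn V => span A {P.ι q.2.2}) hL (mem_span_singleton_self _)
  obtain ⟨⟨a, c, r⟩, ⟨c', d, u⟩, hr, hrj, hrp, hu, hfac⟩ :
      ∃ r u : PathIn V, ¬ P.Z r.2.2 ∧ r.1 = j ∧ P.ι r.2.2 * P.ι p = 0 ∧
        1 ≤ u.2.2.length ∧ P.ι w = P.ι u.2.2 * P.ι r.2.2 :=
    not_not.1 fun hmin => hL ⟨hz, rfl, hw, hmin⟩
  dsimp only at hrj hrp hu hfac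
  subst hrj
  obtain rfl : c' = c := P.eq_of_ι_mul_ι_ne_zero fun h0 => hz ((P.zero_iff w).1 (hfac.trans h0))
  rw [← P.mul_comp] at hfac
  have hlen := congrArg (fun x : PathIn V => x.2.2.length)
    (P.eq_of_ι_eq (x := ⟨_, b, w⟩) (y := ⟨_, d, r.comp u⟩) hz hfac)
  simp only [Path.length_comp] at hlen
  rw [hfac, P.mul_comp, ← smul_eq_mul]
  exact smul_mem _ _ (ih r.length (by omega) r hrp rfl)

/-- The map `π_p : A e_{t(p)} → A p` of the paper. -/
def mulPath {i j : V} (p : Path i j) :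
    span A {P.ι (Path.nil : Path j j)} →ₗ[A] span A {P.ι p} :=
  (LinearMap.toSpanSingleton A A (P.ι p)).restrict fun x _ => mem_span_singleton.2 ⟨x, rfl⟩

lemma mulPath_surjective {i j : V} (p : Path i j) : Surjective (P.mulPath p) := by
  rintro ⟨_, hy⟩
  obtain ⟨a, rfl⟩ := mem_span_singleton.1 hy
  refine ⟨⟨a * P.ι (Path.nil : Path j j), mem_span_singleton.2 ⟨a, rfl⟩⟩,
    Subtype.ext ?_⟩
  change a * P.ι (Path.nil : Path j j) * P.ι p = a * P.ι p
  rw [mul_assoc, P.nil_mul_ι]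

lemma map_ker_mulPath {i j : V} (p : Path i j) :
    map (span A {P.ι (Path.nil : Path j j)}).subtype (LinearMap.ker (P.mulPath p)) =
      ⨆ q ∈ P.LSet p, span A {P.ι q.2.2} := by
  have he := P.isIdempotentElem_ι_nil j
  refine le_antisymm ?_ (iSup₂_le fun q hq => ?_)
  · rintro _ ⟨⟨y, hy⟩, hyp, rfl⟩
    have hyp : y ∈ LinearMap.ker (LinearMap.mulRight k (P.ι p)) :=
      congrArg Subtype.val hyp
    rw [P.ker_mulRight_ι] at hyp
    have hye := mem_map_of_mem (f := LinearMap.mulRight k (P.ι (Path.nil : Path j j))) hyp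
    rw [map_span, ← Set.image_comp, LinearMap.mulRight_apply,
      he.mul_eq_self_of_mem_span_singleton hy] at hye
    refine (span_le (p := (⨆ q ∈ P.LSet p, span A {P.ι q.2.2}).restrictScalars k)).2 ?_ hye
    rintro _ ⟨⟨a, b, w⟩, hw : P.ι w * P.ι p = 0, rfl⟩
    by_cases ha : a = j
    · subst ha
      rw [Function.comp_apply, LinearMap.mulRight_apply, P.ι_mul_nil]
      exact P.ι_mem_iSup_LSet p w hw
    · rw [Function.comp_apply, LinearMap.mulRight_apply, P.ι_mul_ι_of_ne w _ ha]
      exact zero_mem _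
  · obtain ⟨a, b, q⟩ := q
    obtain rfl : a = j := hq.2.1
    refine span_le.2 (Set.singleton_subset_iff.2 ⟨⟨P.ι q, ?_⟩, Subtype.ext hq.2.2.1, rfl⟩)
    exact mem_span_singleton.2 ⟨P.ι q, P.ι_mul_nil q⟩

variable {P} in
lemma one_le_length_of_mem_LSet {i j : V} {p : Path i j} (hp : ¬ P.Z p) {q : PathIn V}
    (hq : q ∈ P.LSet p) : 1 ≤ q.2.2.length := by
  obtain ⟨a, b, q⟩ := q
  obtain rfl : a = j := hq.2.1
  refine Nat.one_le_iff_ne_zero.2 fun h0 => hp ?_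
  obtain rfl := q.eq_of_length_zero h0
  rw [← P.zero_iff, ← P.nil_mul_ι p, ← q.eq_nil_of_length_zero h0]
  exact hq.2.2.1

lemma isNilpotent_of_mem_ker_mulPath {i j : V} {p : Path i j} (hp : ¬ P.Z p)
    {m : span A {P.ι (Path.nil : Path j j)}} (hm : m ∈ LinearMap.ker (P.mulPath p)) :
    IsNilpotent (m : A) := by
  refine P.isNilpotent_of_mem_lengthGESpan_one ?_
  have hm' : (m : A) ∈ ⨆ q ∈ P.LSet p, span A {P.ι q.2.2} :=
    P.map_ker_mulPath p ▸ mem_map_of_mem hm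
  suffices h : (⨆ q ∈ P.LSet p, span A {P.ι q.2.2}).restrictScalars k ≤ P.lengthGESpan 1 from
    h hm'
  simp only [restrictScalars_iSup, iSup_le_iff]
  intro q hq
  exact (P.span_ι_le_lengthGESpan q).trans
    (P.lengthGESpan_antitone (one_le_length_of_mem_LSet hp hq))

end MonomialPresentation

open MonomialPresentation in
theorem exact_sequence_for_cyclic_module_general (k : Type u) (A : Type v) (V : Type w)
    [Field k] [Ring A] [Algebra k A] [Quiver.{w} V] [Fintype V]
    (P : MonomialPresentation k A V) {i j : V} (p : Quiver.Path i j)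
    (hp : ¬ P.Z p) :
    ∃ π : (Submodule.span A {P.ι (Quiver.Path.nil : Quiver.Path j j)}) →ₗ[A]
        (Submodule.span A {P.ι p}),
      (∀ x : Submodule.span A {P.ι (Quiver.Path.nil : Quiver.Path j j)},
        (π x : A) = (x : A) * P.ι p) ∧
      Function.Surjective π ∧
      Submodule.map (Submodule.span A {P.ι (Quiver.Path.nil : Quiver.Path j j)}).subtype
          (LinearMap.ker π) =
        (⨆ q ∈ P.LSet p, Submodule.span A {P.ι q.2.2}) ∧
      iSupIndep (fun q : P.LSet p => Submodule.span A {P.ι q.1.2.2}) ∧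
      Module.Projective A (Submodule.span A {P.ι (Quiver.Path.nil : Quiver.Path j j)}) ∧
      (∀ N : Submodule A (Submodule.span A {P.ι (Quiver.Path.nil : Quiver.Path j j)}),
        N ⊔ LinearMap.ker π = ⊤ → N = ⊤) := by
  have he := P.isIdempotentElem_ι_nil j
  exact ⟨P.mulPath p, fun _ => rfl, P.mulPath_surjective p, P.map_ker_mulPath p,
    P.iSupIndep_span_LSet p, he.projective_span_singleton,
    fun _ hN => he.eq_top_of_sup_eq_top (fun _ hm => P.isNilpotent_of_mem_ker_mulPath hp hm) hN⟩

open MonomialPresentation in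
/-- Lemma 3.1: for a nonzero nontrivial path `p` in a monomial algebra `A` there is an
exact sequence `0 → ⊕_{q ∈ L(p)} Aq → Ae_{t(p)} → Ap → 0`, where the surjection
`π_p` sends `e_{t(p)}` to `p` and the kernel is the (independent) sum of the left ideals
`Aq`, `q ∈ L(p)`; moreover `π_p` is a projective cover of `Ap`. -/
theorem exact_sequence_for_cyclic_module (k : Type u) (A : Type v) (V : Type w)
    [Field k] [Ring A] [Algebra k A] [Quiver.{w} V] [Fintype V]
    (P : MonomialPresentation k A V) {i j : V} (p : Quiver.Path i j)
    (hp : ¬ P.Z p) (hlen : 1 ≤ p.length) :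
    ∃ π : (Submodule.span A {P.ι (Quiver.Path.nil : Quiver.Path j j)}) →ₗ[A]
        (Submodule.span A {P.ι p}),
      (∀ x : Submodule.span A {P.ι (Quiver.Path.nil : Quiver.Path j j)},
        (π x : A) = (x : A) * P.ι p) ∧
      Function.Surjective π ∧
      Submodule.map (Submodule.span A {P.ι (Quiver.Path.nil : Quiver.Path j j)}).subtype
          (LinearMap.ker π) =
        (⨆ q ∈ P.LSet p, Submodule.span A {P.ι q.2.2}) ∧
      iSupIndep (fun q : P.LSet p => Submodule.span A {P.ι q.1.2.2}) ∧
      Module.Projective A (Submodule.span A {P.ι (Quiver.Path.nil : Quiver.Path j j)}) ∧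
      (∀ N : Submodule A (Submodule.span A {P.ι (Quiver.Path.nil : Quiver.Path j j)}),
        N ⊔ LinearMap.ker π = ⊤ → N = ⊤) :=
  exact_sequence_for_cyclic_module_general k A V P p hp
end

section
/- Let A = kQ/I be a monomial algebra and let p, q be nonzero nontrivial paths with s(p) = t(q). Then (p, q) is a perfect pair if and only if: (P'1) pq ∈ F; (P'2) whenever q' is a nonzero path with t(q') = s(p) and pq' = γδ for some path γ and some δ ∈ F, then q' = qx for some path x; and (P'3) whenever p' is a nonzero path with s(p') = t(q) and p'q = δγ for some path γ and some δ ∈ F, then p' = yp for some path y. Here F is the set of minimal paths contained in I. -/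
universe u v w

/-!
A path lies in `I` exactly when it contains a path of `F`, and a path of `F` inside `pq` with
`p, q ∉ I` must straddle the junction: it is `vu` with `p = sv` and `q = ur`. This turns the
conditions "`pq' = 0`" and "`p'q = 0`" of (P2) and (P3) into the conditions on `F` of (P'2) and
(P'3). For (P'1), such a straddling `vu ∈ F` inside `pq` gives `pu = 0` and `vq = 0`, so by
(P2) and (P3) `u = qx` and `v = yp`; hence `vu` is at least as long as `pq`, so it is `pq`.
-/
open Quiver

namespace Quiver.Path

variable {V : Type*} [Quiver V]

theorem exists_eq_comp_of_comp_eq_comp_s7 {a b b' c : V} {x : Path a b} {y : Path b c}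
    {z : Path a b'} {w : Path b' c} (h : x.comp y = z.comp w) (hle : y.length ≤ w.length) :
    ∃ m : Path b' b, x = z.comp m ∧ w = m.comp y := by
  induction y with
  | nil => exact ⟨w, by simpa using h, rfl⟩
  | cons y e ih =>
    cases w with
    | nil => simp at hle
    | cons w e' =>
      rw [comp_cons, comp_cons] at h
      obtain rfl := obj_eq_of_cons_eq_cons h
      obtain rfl : e = e' := eq_of_heq (hom_heq_of_cons_eq_cons h)
      obtain ⟨m, rfl, rfl⟩ :=
        ih (eq_of_heq (heq_of_cons_eq_cons h)) (by simpa using hle)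
      exact ⟨m, rfl, comp_cons m y e⟩

theorem comp_eq_comp_comp_cases {a b c d e : V} {x : Path a b} {y : Path b e}
    {r : Path a c} {δ : Path c d} {s : Path d e} (h : x.comp y = (r.comp δ).comp s) :
    (∃ t : Path d b, x = (r.comp δ).comp t) ∨ (∃ t : Path b c, y = (t.comp δ).comp s) ∨
      ∃ (u : Path c b) (v : Path b d), x = r.comp u ∧ y = v.comp s ∧ δ = u.comp v := by
  have hlen := congrArg length h
  simp only [length_comp] at hlen
  rcases le_or_gt (r.length + δ.length) x.length with hx | hx
  · obtain ⟨t, ht, -⟩ := exists_eq_comp_of_comp_eq_comp_s7 h (by omega)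
    exact Or.inl ⟨t, ht⟩
  rcases le_or_gt x.length r.length with hr | hr
  · rw [comp_assoc] at h
    obtain ⟨t, -, ht⟩ := exists_eq_comp_of_comp_eq_comp_s7 h.symm (by simp only [length_comp]; omega)
    exact Or.inr (Or.inl ⟨t, by rw [ht, comp_assoc]⟩)
  rw [comp_assoc] at h
  obtain ⟨u, hu, hδs⟩ := exists_eq_comp_of_comp_eq_comp_s7 h (by simp only [length_comp]; omega)
  have hulen := congrArg length hu
  simp only [length_comp] at hulen
  obtain ⟨v, hv, hy⟩ := exists_eq_comp_of_comp_eq_comp_s7 hδs (by omega)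
  exact Or.inr (Or.inr ⟨u, v, hu, hy, hv⟩)

end Quiver.Path

open Quiver.Path

section Subpath

variable {V : Type w} [Quiver.{w} V]

theorem IsSubpathIn.refl (x : PathIn V) : IsSubpathIn x x :=
  ⟨.nil, .nil, by simp⟩

theorem IsSubpathIn.trans {x y z : PathIn V} (hzy : IsSubpathIn z y) (hyx : IsSubpathIn y x) :
    IsSubpathIn z x := by
  obtain ⟨r', s', hz⟩ := hzy
  obtain ⟨r, s, hy⟩ := hyx
  exact ⟨r.comp r', s'.comp s, by simp only [hy, hz, comp_assoc]⟩

theorem IsSubpathIn.length_lt {x y : PathIn V} (h : IsSubpathIn y x) (hne : y ≠ x) :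
    y.2.2.length < x.2.2.length := by
  obtain ⟨a, b, x⟩ := x
  obtain ⟨c, d, y⟩ := y
  obtain ⟨r, s, h⟩ := h
  dsimp only at r s h
  subst h
  simp only [length_comp]
  by_contra! hle
  obtain rfl := r.eq_of_length_zero (by omega)
  obtain rfl := s.eq_of_length_zero (by omega)
  rw [r.eq_nil_of_length_zero (by omega), s.eq_nil_of_length_zero (by omega)] at hne
  simp at hne

end Subpath

namespace MonomialPresentation

variable {k : Type u} {A : Type v} {V : Type w}
  [Field k] [Ring A] [Algebra k A] [Quiver.{w} V] [Fintype V]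
  (P : MonomialPresentation k A V)

theorem z_comp_of_left {a b c : V} {x : Path a b} (hx : P.Z x) (y : Path b c) :
    P.Z (x.comp y) :=
  P.z_mul x y (Or.inl hx)

theorem z_comp_of_right {a b c : V} (x : Path a b) {y : Path b c} (hy : P.Z y) :
    P.Z (x.comp y) :=
  P.z_mul x y (Or.inr hy)

theorem exists_inF_isSubpathIn {x : PathIn V} (hx : P.Z x.2.2) :
    ∃ y, P.InF y ∧ IsSubpathIn y x := by
  obtain ⟨y, ⟨hy, hyx⟩, hmin⟩ := (measure fun y : PathIn V => y.2.2.length).wf.has_min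
    {y | P.Z y.2.2 ∧ IsSubpathIn y x} ⟨x, hx, .refl x⟩
  exact ⟨y, ⟨hy, fun z hzy hne hz => hmin z ⟨hz, hzy.trans hyx⟩ (hzy.length_lt hne)⟩, hyx⟩

theorem exists_eq_comp_of_z_of_comp_eq {a b c d e : V} {x : Path a b} {y : Path b e}
    {r : Path a c} {δ : Path c d} {s : Path d e} (hx : ¬ P.Z x) (hy : ¬ P.Z y) (hδ : P.Z δ)
    (h : x.comp y = (r.comp δ).comp s) :
    ∃ (u : Path c b) (v : Path b d), x = r.comp u ∧ y = v.comp s ∧ δ = u.comp v := by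
  rcases comp_eq_comp_comp_cases h with ⟨t, rfl⟩ | ⟨t, rfl⟩ | hsplit
  · exact absurd (P.z_comp_of_left (P.z_comp_of_right r hδ) t) hx
  · exact absurd (P.z_comp_of_left (P.z_comp_of_right t hδ) s) hy
  · exact hsplit

theorem exists_inF_of_z_comp {a b e : V} {x : Path a b} {y : Path b e} (hx : ¬ P.Z x)
    (hy : ¬ P.Z y) (h : P.Z (x.comp y)) :
    ∃ (c d : V) (r : Path a c) (u : Path c b) (v : Path b d) (s : Path d e),
      P.InF ⟨c, d, u.comp v⟩ ∧ x = r.comp u ∧ y = v.comp s := by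
  obtain ⟨⟨c, d, δ⟩, hδ, r, s, hrs⟩ := P.exists_inF_isSubpathIn (x := ⟨a, e, x.comp y⟩) h
  dsimp only at r s hrs
  have hδZ : P.Z δ := hδ.1
  obtain ⟨u, v, rfl, rfl, rfl⟩ := P.exists_eq_comp_of_z_of_comp_eq hx hy hδZ hrs
  exact ⟨c, d, r, u, v, s, hδ, rfl, rfl⟩

theorem forall_z_comp_iff_forall_inF_prefix {i j l : V} {p : Path i j} (q : Path l i)
    (hp : ¬ P.Z p) :
    (∀ (m : V) (q' : Path m i), ¬ P.Z q' → P.Z (q'.comp p) → ∃ x : Path m l, q' = x.comp q) ↔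
      ∀ (m : V) (q' : Path m i), ¬ P.Z q' →
        (∃ (c : V) (δ : Path m c) (γ : Path c j), P.InF ⟨m, c, δ⟩ ∧ q'.comp p = δ.comp γ) →
        ∃ x : Path m l, q' = x.comp q := by
  refine ⟨fun hR m q' hq' ⟨c, δ, γ, hδ, heq⟩ => hR m q' hq' (heq ▸ P.z_comp_of_left hδ.1 γ),
    fun hR m q' hq' hZ => ?_⟩
  obtain ⟨c, d, r, u, v, s, huv, rfl, rfl⟩ := P.exists_inF_of_z_comp hq' hp hZ
  obtain ⟨x, rfl⟩ := hR c u (fun hu => hq' (P.z_comp_of_right r hu)) ⟨d, u.comp v, s, huv, by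
    rw [comp_assoc]⟩
  exact ⟨r.comp x, (comp_assoc r x q).symm⟩

theorem forall_z_comp_iff_forall_inF_suffix {i j l : V} (p : Path i j) {q : Path l i}
    (hq : ¬ P.Z q) :
    (∀ (m : V) (p' : Path i m), ¬ P.Z p' → P.Z (q.comp p') → ∃ y : Path j m, p' = p.comp y) ↔
      ∀ (m : V) (p' : Path i m), ¬ P.Z p' →
        (∃ (c : V) (γ : Path l c) (δ : Path c m), P.InF ⟨c, m, δ⟩ ∧ q.comp p' = γ.comp δ) →
        ∃ y : Path j m, p' = p.comp y := by
  refine ⟨fun hL m p' hp' ⟨c, γ, δ, hδ, heq⟩ => hL m p' hp' (heq ▸ P.z_comp_of_right γ hδ.1),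
    fun hL m p' hp' hZ => ?_⟩
  obtain ⟨c, d, r, u, v, s, huv, rfl, rfl⟩ := P.exists_inF_of_z_comp hq hp' hZ
  obtain ⟨y, rfl⟩ := hL d v (fun hv => hp' (P.z_comp_of_left hv s)) ⟨c, r, u.comp v, huv, by
    rw [comp_assoc]⟩
  exact ⟨y.comp s, comp_assoc p y s⟩

theorem PerfectPair.inF_comp {P : MonomialPresentation k A V} {i j l : V} {p : Path i j}
    {q : Path l i} (h : P.PerfectPair p q) : P.InF ⟨l, j, q.comp p⟩ := by
  obtain ⟨-, -, hp, hq, hZ, hR, hL⟩ := h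
  refine ⟨hZ, fun ⟨c, d, δ⟩ hsub hne hδ => ?_⟩
  have hlt := hsub.length_lt hne
  obtain ⟨r, s, hrs⟩ := hsub
  dsimp only at r s hrs hlt hδ
  obtain ⟨u, v, rfl, rfl, rfl⟩ := P.exists_eq_comp_of_z_of_comp_eq hq hp hδ hrs
  obtain ⟨x, hx⟩ := hR c u (fun hu => hq (P.z_comp_of_right r hu))
    (by rw [← comp_assoc]; exact P.z_comp_of_left hδ s)
  obtain ⟨y, hy⟩ := hL d v (fun hv => hp (P.z_comp_of_left hv s))
    (by rw [comp_assoc]; exact P.z_comp_of_right r hδ)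
  have hxlen := congrArg length hx
  have hylen := congrArg length hy
  simp only [length_comp] at hxlen hylen hlt
  omega

end MonomialPresentation

open MonomialPresentation in
/-- Lemma 3.3: characterization of perfect pairs via the set `F` of minimal relations:
`(p, q)` is perfect iff `pq ∈ F`, every nonzero `q'` with `t(q') = s(p)` and
`pq' = γδ` (`δ ∈ F`) is a right multiple of `q`, and every nonzero `p'` with
`s(p') = t(q)` and `p'q = δγ` (`δ ∈ F`) is a left multiple of `p`. -/
theorem perfect_pair_iff_F_conditions (k : Type u) (A : Type v) (V : Type w)
    [Field k] [Ring A] [Algebra k A] [Quiver.{w} V] [Fintype V]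
    (P : MonomialPresentation k A V) {i j l : V}
    (p : Quiver.Path i j) (q : Quiver.Path l i)
    (hp : ¬ P.Z p) (hq : ¬ P.Z q) (hlp : 1 ≤ p.length) (hlq : 1 ≤ q.length) :
    P.PerfectPair p q ↔
      (P.InF ⟨l, j, q.comp p⟩ ∧
       (∀ (m : V) (q' : Quiver.Path m i), ¬ P.Z q' →
         (∃ (c : V) (δ : Quiver.Path m c) (γ : Quiver.Path c j),
           P.InF ⟨m, c, δ⟩ ∧ q'.comp p = δ.comp γ) →
         ∃ x : Quiver.Path m l, q' = x.comp q) ∧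
       (∀ (m : V) (p' : Quiver.Path i m), ¬ P.Z p' →
         (∃ (c : V) (γ : Quiver.Path l c) (δ : Quiver.Path c m),
           P.InF ⟨c, m, δ⟩ ∧ q.comp p' = γ.comp δ) →
         ∃ y : Quiver.Path j m, p' = p.comp y)) := by
  constructor
  · intro h
    obtain ⟨-, -, -, -, -, hR, hL⟩ := id h
    exact ⟨h.inF_comp, (P.forall_z_comp_iff_forall_inF_prefix q hp).mp hR,
      (P.forall_z_comp_iff_forall_inF_suffix p hq).mp hL⟩
  · rintro ⟨hF, hR, hL⟩
    exact ⟨hlp, hlq, hp, hq, hF.1, (P.forall_z_comp_iff_forall_inF_prefix q hp).mpr hR,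
      (P.forall_z_comp_iff_forall_inF_suffix p hq).mpr hL⟩
end

section
/- Let A = kQ/I be a monomial algebra and (p, q) a perfect pair. Then the natural map θ_q : qA → Hom_A(Aq, A), θ_q(qx)(y) = yx, is an isomorphism of right A-modules. -/
universe u v w

/-!
Evaluation at `g` identifies `Hom_A(Ag, A)` with `{c ∈ A | ∀ b, bg = 0 → bc = 0}`, and `θ_g`
with the inclusion of `gA` into it; so `θ_g` is injective, and onto as soon as every such `c`
lies in `gA`. For a perfect pair `(p, q)` and such a `c`, we have `e_t c = 0` for `t ≠ s(p)` and
`pc = 0`, because `e_t q = 0` and `pq = 0`. Left multiplication by `e_t` or by `p` sends distinct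
nonzero paths to distinct nonzero paths or to zero, so comparing coefficients in the basis of
nonzero paths, every path `ρ` occurring in `c` ends at `s(p)` and has `pρ = 0`. Since
`R(p) = {q}`, each such `ρ` is of the form `qx`, whence `c ∈ qA`.
-/

theorem Module.Basis.repr_eq_zero_of_map_eq_zero {ι κ R M N : Type*} [Semiring R]
    [AddCommMonoid M] [Module R M] [AddCommMonoid N] [Module R N]
    (b : Module.Basis ι R M) (b' : Module.Basis κ R N) {f : M →ₗ[R] N} {c : M} (hc : f c = 0)
    {s : ι} {t : κ} (h : ∀ s', b'.repr (f (b s')) t = b.repr (b s') s) :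
    b.repr c s = 0 := by
  have hcoord : b'.coord t ∘ₗ f = b.coord s := b.ext h
  simpa [hc] using (LinearMap.congr_fun hcoord c).symm

section SpanSingleton

open Submodule

variable {A : Type*} [Ring A]

/-- The `A`-linear map `Ag → A`, `bg ↦ bc`; it is well defined because the left annihilator
of `g` kills `c`. -/
noncomputable def spanSingletonLift (g c : A) (hc : ∀ b : A, b * g = 0 → b * c = 0) :
    (A ∙ g) →ₗ[A] A :=
  (liftQ _ (LinearMap.toSpanSingleton A A c) hc) ∘ₗ
    (Ideal.quotTorsionOfEquivSpanSingleton A A g).symm.toLinearMap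

theorem spanSingletonLift_apply {g c : A} (hc : ∀ b : A, b * g = 0 → b * c = 0) {b : A}
    {m : A ∙ g} (hm : b * g = m) : spanSingletonLift g c hc m = b * c := by
  obtain rfl : m = b • ⟨g, mem_span_singleton_self g⟩ := Subtype.ext hm.symm
  rw [spanSingletonLift, LinearMap.comp_apply, LinearEquiv.coe_coe,
    ← Ideal.quotTorsionOfEquivSpanSingleton_apply_mk, LinearEquiv.symm_apply_apply]
  rfl

theorem mul_eq_zero_of_mem_span_op {g n : A} (hn : n ∈ span Aᵐᵒᵖ {g}) {b : A}
    (hb : b * g = 0) : b * n = 0 := by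
  obtain ⟨a, rfl⟩ := mem_span_singleton.1 hn
  rw [MulOpposite.smul_eq_mul_unop, ← mul_assoc, hb, zero_mul]

/-- The map `θ_g : gA → Hom_A(Ag, A)`, `θ_g(gx)(y) = yx`. -/
noncomputable def toHomSpanSingleton (g : A) : span Aᵐᵒᵖ {g} →ₗ[Aᵐᵒᵖ] ((A ∙ g) →ₗ[A] A) where
  toFun n := spanSingletonLift g n fun _ => mul_eq_zero_of_mem_span_op n.2
  map_add' n n' := by
    ext m
    obtain ⟨b, hb⟩ := mem_span_singleton.1 m.2
    simp only [LinearMap.add_apply, spanSingletonLift_apply _ hb, coe_add, mul_add]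
  map_smul' a n := by
    ext m
    obtain ⟨b, hb⟩ := mem_span_singleton.1 m.2
    simp only [LinearMap.smul_apply, spanSingletonLift_apply _ hb, coe_smul,
      MulOpposite.smul_eq_mul_unop, RingHom.id_apply, mul_assoc]

theorem toHomSpanSingleton_apply_of_mul_eq {g b : A} (n : span Aᵐᵒᵖ {g}) {m : A ∙ g}
    (hm : b * g = m) : toHomSpanSingleton g n m = b * n :=
  spanSingletonLift_apply _ hm

theorem toHomSpanSingleton_apply {g : A} (x : A) (hx : g * x ∈ span Aᵐᵒᵖ {g}) (y : A ∙ g) :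
    toHomSpanSingleton g ⟨g * x, hx⟩ y = y * x := by
  obtain ⟨b, hb⟩ := mem_span_singleton.1 y.2
  rw [toHomSpanSingleton_apply_of_mul_eq _ hb, ← hb, smul_eq_mul, mul_assoc]

theorem toHomSpanSingleton_injective (g : A) : Function.Injective (toHomSpanSingleton g) := by
  intro n n' h
  have hg := LinearMap.congr_fun h ⟨g, mem_span_singleton_self g⟩
  rw [toHomSpanSingleton_apply_of_mul_eq _ (one_mul g),
    toHomSpanSingleton_apply_of_mul_eq _ (one_mul g), one_mul, one_mul] at hg
  exact Subtype.ext hg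

theorem toHomSpanSingleton_surjective {g : A}
    (h : ∀ c : A, (∀ b : A, b * g = 0 → b * c = 0) → c ∈ span Aᵐᵒᵖ {g}) :
    Function.Surjective (toHomSpanSingleton g) := by
  intro f
  set y : A ∙ g := ⟨g, mem_span_singleton_self g⟩
  have hf : ∀ b : A, f (b • y) = b * f y := fun b => f.map_smul b y
  refine ⟨⟨f y, h _ fun b hb => ?_⟩, ?_⟩
  · rw [← hf, show b • y = 0 from Subtype.ext hb, map_zero]
  · ext m
    obtain ⟨b, hb⟩ := mem_span_singleton.1 m.2
    rw [toHomSpanSingleton_apply_of_mul_eq _ hb, ← hf]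
    exact congrArg f (Subtype.ext hb)

end SpanSingleton

namespace MonomialPresentation

open Quiver

variable {k : Type u} {A : Type v} {V : Type w}
  [Field k] [Ring A] [Algebra k A] [Quiver.{w} V] [Fintype V]
  (P : MonomialPresentation k A V)

theorem ι_nil_mul {m t : V} (γ : Path m t) : P.ι (Path.nil : Path t t) * P.ι γ = P.ι γ := by
  rw [← P.mul_comp, Path.comp_nil]

theorem ι_mul_ι_nil {i j : V} (p : Path i j) : P.ι p * P.ι (Path.nil : Path i i) = P.ι p := by
  rw [← P.mul_comp, Path.nil_comp]

theorem ι_nil_mul_of_ne {m t t' : V} (ht : t' ≠ t) (γ : Path m t) :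
    P.ι (Path.nil : Path t' t') * P.ι γ = 0 := by
  rw [← P.ι_nil_mul γ, ← mul_assoc, P.orth t' t ht, zero_mul]

theorem ι_mul_ι_of_ne_s9 {i j m t : V} (p : Path i j) (γ : Path m t) (ht : t ≠ i) :
    P.ι p * P.ι γ = 0 := by
  rw [← P.ι_mul_ι_nil p, mul_assoc, P.ι_nil_mul_of_ne (Ne.symm ht), mul_zero]

noncomputable def pathBasis : Module.Basis {x : PathIn V // ¬ P.Z x.2.2} k A :=
  .mk P.indep <| by
    rw [← P.span_top]
    refine Submodule.span_le.2 ?_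
    rintro _ ⟨x, rfl⟩
    by_cases hx : P.Z x.2.2
    · simp [(P.zero_iff _).2 hx]
    · exact Submodule.subset_span ⟨⟨x, hx⟩, rfl⟩

theorem pathBasis_apply (x : {x : PathIn V // ¬ P.Z x.2.2}) : P.pathBasis x = P.ι x.1.2.2 :=
  Module.Basis.mk_apply _ _ _

theorem pathBasis_repr_ι {m t : V} {ρ : Path m t} (hρ : ¬ P.Z ρ) :
    P.pathBasis.repr (P.ι ρ) = Finsupp.single ⟨⟨m, t, ρ⟩, hρ⟩ 1 := by
  rw [← P.pathBasis.repr_self, pathBasis_apply]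

theorem pathBasis_repr_eq_zero_of_ι_nil_mul_eq_zero {c : A} {m t : V} {ρ : Path m t}
    (hρ : ¬ P.Z ρ) (hc : P.ι (Path.nil : Path t t) * c = 0) :
    P.pathBasis.repr c ⟨⟨m, t, ρ⟩, hρ⟩ = 0 := by
  refine P.pathBasis.repr_eq_zero_of_map_eq_zero P.pathBasis
    (f := LinearMap.mulLeft k (P.ι (Path.nil : Path t t))) (t := ⟨⟨m, t, ρ⟩, hρ⟩) hc ?_
  rintro ⟨⟨m', t', ρ'⟩, hρ'⟩
  simp only [LinearMap.mulLeft_apply, pathBasis_apply]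
  rw [P.pathBasis_repr_ι hρ']
  by_cases ht : t' = t
  · subst ht
    rw [P.ι_nil_mul, P.pathBasis_repr_ι hρ']
  · rw [P.ι_nil_mul_of_ne (Ne.symm ht), map_zero, Finsupp.zero_apply, Finsupp.single_eq_of_ne]
    rintro ⟨⟩
    exact ht rfl

theorem pathBasis_repr_eq_zero_of_ι_mul_eq_zero {i j : V} {p : Path i j} {c : A}
    (hc : P.ι p * c = 0) {m : V} {ρ : Path m i} (hρ : ¬ P.Z ρ) (hρp : ¬ P.Z (ρ.comp p)) :
    P.pathBasis.repr c ⟨⟨m, i, ρ⟩, hρ⟩ = 0 := by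
  refine P.pathBasis.repr_eq_zero_of_map_eq_zero P.pathBasis
    (f := LinearMap.mulLeft k (P.ι p)) (t := ⟨⟨m, j, ρ.comp p⟩, hρp⟩) hc ?_
  rintro ⟨⟨m', t', ρ'⟩, hρ'⟩
  simp only [LinearMap.mulLeft_apply, pathBasis_apply]
  rw [P.pathBasis_repr_ι hρ']
  by_cases ht : t' = i
  · subst ht
    by_cases hρ'p : P.Z (ρ'.comp p)
    · rw [← P.mul_comp, (P.zero_iff _).2 hρ'p, map_zero, Finsupp.zero_apply,
        Finsupp.single_eq_of_ne]
      rintro ⟨⟩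
      exact hρp hρ'p
    · rw [← P.mul_comp, P.pathBasis_repr_ι hρ'p]
      by_cases he : (⟨⟨m', t', ρ'⟩, hρ'⟩ : {x : PathIn V // ¬ P.Z x.2.2}) = ⟨⟨m, t', ρ⟩, hρ⟩
      · cases he
        rw [Finsupp.single_eq_same, Finsupp.single_eq_same]
      · rw [Finsupp.single_eq_of_ne' he, Finsupp.single_eq_of_ne']
        intro hx
        obtain ⟨rfl, hx⟩ := (Sigma.mk.inj_iff.1 (congrArg Subtype.val hx))
        obtain rfl := Path.comp_inj_left.1 (eq_of_heq (Sigma.mk.inj_iff.1 (eq_of_heq hx)).2)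
        exact he rfl
  · rw [P.ι_mul_ι_of_ne_s9 p ρ' ht, map_zero, Finsupp.zero_apply, Finsupp.single_eq_of_ne]
    rintro ⟨⟩
    exact ht rfl

/-- `hR` says `R(p) = {q}`: every nonzero path `ρ` with `pρ = 0` (`ρ.comp p` in Lean's order)
is of the form `qx`. -/
theorem pathBasis_mem_span_of_repr_ne_zero {i j l : V} {p : Path i j} {q : Path l i}
    (hqp : P.Z (q.comp p))
    (hR : ∀ (m : V) (ρ : Path m i), ¬ P.Z ρ → P.Z (ρ.comp p) → ∃ x : Path m l, ρ = x.comp q)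
    {c : A} (hc : ∀ b : A, b * P.ι q = 0 → b * c = 0) {x : {x : PathIn V // ¬ P.Z x.2.2}}
    (hx : P.pathBasis.repr c x ≠ 0) : P.pathBasis x ∈ Submodule.span Aᵐᵒᵖ {P.ι q} := by
  obtain ⟨⟨m, t, ρ⟩, hρ⟩ := x
  obtain rfl : t = i := by
    by_contra ht
    exact hx (P.pathBasis_repr_eq_zero_of_ι_nil_mul_eq_zero hρ (hc _ (P.ι_nil_mul_of_ne ht q)))
  have hρp : P.Z (ρ.comp p) := by
    by_contra hρp
    refine hx (P.pathBasis_repr_eq_zero_of_ι_mul_eq_zero (hc _ ?_) hρ hρp)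
    rw [← P.mul_comp, (P.zero_iff _).2 hqp]
  obtain ⟨y, rfl⟩ := hR m ρ hρ hρp
  rw [pathBasis_apply, P.mul_comp]
  exact Submodule.mem_span_singleton.2 ⟨MulOpposite.op (P.ι y), rfl⟩

theorem mem_span_op_ι_of_leftAnnihilator {i j l : V} {p : Path i j} {q : Path l i}
    (hqp : P.Z (q.comp p))
    (hR : ∀ (m : V) (ρ : Path m i), ¬ P.Z ρ → P.Z (ρ.comp p) → ∃ x : Path m l, ρ = x.comp q)
    {c : A} (hc : ∀ b : A, b * P.ι q = 0 → b * c = 0) :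
    c ∈ Submodule.span Aᵐᵒᵖ {P.ι q} := by
  set N := Submodule.span Aᵐᵒᵖ {P.ι q}
  have hc' : c ∈ Submodule.span k (P.pathBasis '' {x | P.pathBasis x ∈ N}) :=
    P.pathBasis.mem_span_image.2 fun _ hx =>
      P.pathBasis_mem_span_of_repr_ne_zero hqp hR hc (Finsupp.mem_support_iff.1 hx)
  exact (Submodule.span_le (p := N.restrictScalars k)).2 (Set.image_subset_iff.2 fun _ => id) hc'

end MonomialPresentation

open MonomialPresentation in
/-- Lemma 3.6: for a perfect pair `(p, q)` the map `θ_q : qA → Hom_A(Aq, A)`,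
`θ_q(qx)(y) = yx`, is an isomorphism of right `A`-modules. -/
theorem theta_iso_of_perfect_pair (k : Type u) (A : Type v) (V : Type w)
    [Field k] [Ring A] [Algebra k A] [Quiver.{w} V] [Fintype V]
    (P : MonomialPresentation k A V) {i j l : V}
    (p : Quiver.Path i j) (q : Quiver.Path l i) (h : P.PerfectPair p q) :
    ∃ θ : (Submodule.span Aᵐᵒᵖ ({P.ι q} : Set A)) →ₗ[Aᵐᵒᵖ]
        ((Submodule.span A ({P.ι q} : Set A)) →ₗ[A] A),
      (∀ (x : A) (hx : P.ι q * x ∈ Submodule.span Aᵐᵒᵖ ({P.ι q} : Set A))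
          (y : Submodule.span A ({P.ι q} : Set A)),
        θ ⟨P.ι q * x, hx⟩ y = (y : A) * x) ∧
      Function.Bijective θ := by
  obtain ⟨-, -, -, -, hqp, hR, -⟩ := h
  exact ⟨toHomSpanSingleton (P.ι q), toHomSpanSingleton_apply,
    toHomSpanSingleton_injective _,
    toHomSpanSingleton_surjective fun _ => P.mem_span_op_ι_of_leftAnnihilator hqp hR⟩
end

section
/- Let A = kQ/J^d be a truncated quiver algebra (d ≥ 2) where Q is connected and has no sources or sinks. Then A admits a perfect path if and only if Q is a basic cycle (an oriented cycle quiver with n vertices and n arrows). -/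
universe u v w

/-!
In `kQ/J^d` a path vanishes exactly when its length is at least `d`, so a perfect pair `(p, q)`
has `|p| + |q| = d`, and the conditions `R(p) = {q}`, `L(q) = {p}` can be tested against paths of
the same length obtained by exchanging one arrow. Hence every vertex of `q` other than its source
has a single incoming arrow, and every vertex of `p` other than its target a single outgoing one.
In a cyclic chain of perfect pairs each path plays both roles, so every vertex met has exactly one
incoming and one outgoing arrow; connectedness spreads this to the whole quiver, which is then a
basic cycle. Conversely, in a basic cycle a path is determined by its length and either endpoint,
so any composable `p`, `q` of positive lengths with `|p| + |q| = d` form a perfect pair; sending a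
path to the complementary path ending at its source is an injective map of a finite set, hence
periodic, and its orbits are the required chains.
-/

open Quiver

namespace Quiver.Path

variable {V : Type*} [Quiver V]

lemma sigma_eq_of_length_eq_of_subsingleton_out (hout : ∀ i : V, Subsingleton (Σ j, i ⟶ j))
    {i j j' : V} (p : Path i j) (p' : Path i j') (h : p.length = p'.length) :
    (⟨j, p⟩ : Σ j, Path i j) = ⟨j', p'⟩ := by
  induction p generalizing j' with
  | nil => cases p' with
    | nil => rfl
    | cons _ _ => simp at h
  | cons p e ih => cases p' with
    | nil => simp at h
    | cons p' e' =>
      obtain ⟨rfl, hp⟩ := Sigma.mk.inj_iff.mp (ih p' (by simpa using h))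
      cases eq_of_heq hp
      obtain ⟨rfl, he⟩ := Sigma.mk.inj_iff.mp (Subsingleton.elim (⟨_, e⟩ : Σ k, _ ⟶ k) ⟨_, e'⟩)
      cases eq_of_heq he
      rfl

lemma sigma_eq_of_length_eq_of_subsingleton_in (hin : ∀ j : V, Subsingleton (Σ i, i ⟶ j))
    {i i' j : V} (p : Path i j) (p' : Path i' j) (h : p.length = p'.length) :
    (⟨i, p⟩ : Σ i, Path i j) = ⟨i', p'⟩ := by
  induction p generalizing i' with
  | nil => cases p' with
    | nil => rfl
    | cons _ _ => simp at h
  | cons p e ih => cases p' with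
    | nil => simp at h
    | cons p' e' =>
      obtain ⟨rfl, he⟩ := Sigma.mk.inj_iff.mp (Subsingleton.elim (⟨_, e⟩ : Σ k, k ⟶ _) ⟨_, e'⟩)
      cases eq_of_heq he
      obtain ⟨rfl, hp⟩ := Sigma.mk.inj_iff.mp (ih p' (by simpa using h))
      cases eq_of_heq hp
      rfl

lemma sigma_eq_of_comp_eq_comp_s10 {a b b' c : V} {p : Path a b} {p' : Path a b'}
    {q : Path b c} {q' : Path b' c} (h : p.comp q = p'.comp q') (hl : p.length = p'.length) :
    (⟨b, p⟩ : Σ x, Path a x) = ⟨b', p'⟩ := by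
  have hq : q.length = q'.length := by
    have := congrArg length h
    simp only [length_comp] at this
    omega
  induction q generalizing b' with
  | nil => cases q' with
    | nil => simp only [comp_nil] at h; rw [h]
    | cons _ _ => simp at hq
  | cons q e ih => cases q' with
    | nil => simp at hq
    | cons q' e' =>
      cases obj_eq_of_cons_eq_cons h
      exact ih (eq_of_heq (heq_of_cons_eq_cons h)) hl (by simpa using hq)

end Quiver.Path

section

variable {V : Type w} [Quiver.{w} V]

lemma NoSources.exists_path (h : NoSources V) (L : ℕ) (j : V) :
    ∃ (i : V) (q : Path i j), q.length = L := by
  induction L generalizing j with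
  | zero => exact ⟨j, .nil, rfl⟩
  | succ L ih =>
    obtain ⟨i, ⟨e⟩⟩ := h j
    obtain ⟨i', q, hq⟩ := ih i
    exact ⟨i', q.cons e, by simp [hq]⟩

lemma NoSinks.exists_path (h : NoSinks V) (L : ℕ) (i : V) :
    ∃ (j : V) (q : Path i j), q.length = L := by
  induction L with
  | zero => exact ⟨i, .nil, rfl⟩
  | succ L ih =>
    obtain ⟨j, q, hq⟩ := ih
    obtain ⟨j', ⟨e⟩⟩ := h j
    exact ⟨j', q.cons e, by simp [hq]⟩

lemma QuiverConnected.forall_of_arrow_iff (hconn : QuiverConnected V) (S : V → Prop) {v₀ : V}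
    (h₀ : S v₀) (hstep : ∀ a b : V, Nonempty (a ⟶ b) → (S a ↔ S b)) (v : V) : S v := by
  induction hconn.2 v₀ v with
  | refl => exact h₀
  | tail _ hab ih =>
    rcases hab with hab | hab
    · exact (hstep _ _ hab).mp ih
    · exact (hstep _ _ hab).mpr ih

lemma IsBasicCycleQuiver.subsingleton_out (h : IsBasicCycleQuiver V) (i : V) :
    Subsingleton (Σ j, i ⟶ j) := by
  obtain ⟨n, -, f, hf, hu⟩ := h
  refine ⟨fun ⟨j, a⟩ ⟨j', a'⟩ => ?_⟩
  obtain rfl : j = j' := f.injective (((hf i j).mp ⟨a⟩).trans ((hf i j').mp ⟨a'⟩).symm)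
  rw [hu i j a a']

lemma IsBasicCycleQuiver.subsingleton_in (h : IsBasicCycleQuiver V) (j : V) :
    Subsingleton (Σ i, i ⟶ j) := by
  obtain ⟨n, -, f, hf, hu⟩ := h
  refine ⟨fun ⟨i, a⟩ ⟨i', a'⟩ => ?_⟩
  obtain rfl : i = i' :=
    f.injective (add_right_cancel (((hf i j).mp ⟨a⟩).symm.trans ((hf i' j).mp ⟨a'⟩)))
  rw [hu i j a a']

theorem isBasicCycleQuiver_of_subsingleton [Finite V] (hconn : QuiverConnected V)
    (hsnk : NoSinks V) (hin : ∀ j : V, Subsingleton (Σ i, i ⟶ j))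
    (hout : ∀ i : V, Subsingleton (Σ j, i ⟶ j)) : IsBasicCycleQuiver V := by
  choose σ hσ using hsnk
  have harrow : ∀ i j : V, Nonempty (i ⟶ j) ↔ j = σ i := by
    refine fun i j => ⟨fun ⟨a⟩ => ?_, ?_⟩
    · obtain ⟨b⟩ := hσ i
      exact congrArg Sigma.fst (Subsingleton.elim (⟨j, a⟩ : Σ j, i ⟶ j) ⟨σ i, b⟩)
    · rintro rfl
      exact hσ i
  have hinj : Function.Injective σ := fun a b hab => by
    obtain ⟨ea⟩ := hσ a
    obtain ⟨eb⟩ := hσ b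
    rw [hab] at ea
    exact congrArg Sigma.fst (Subsingleton.elim (⟨a, ea⟩ : Σ i, i ⟶ σ b) ⟨b, eb⟩)
  let π : Equiv.Perm V := Equiv.ofBijective σ hinj.bijective_of_finite
  obtain ⟨v₀⟩ := hconn.1
  have horbit : ∀ v, v ∈ MulAction.orbit (Subgroup.zpowers π) v₀ := fun v => by
    obtain ⟨k, hk⟩ := hconn.forall_of_arrow_iff (π.SameCycle v₀) (Equiv.Perm.SameCycle.refl π v₀)
      (fun a b hab => by rw [(harrow a b).mp hab]; exact Equiv.Perm.sameCycle_apply_right.symm) v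
    exact MulAction.mem_orbit_iff.mpr ⟨⟨π ^ k, Subgroup.zpow_mem_zpowers π k⟩, hk⟩
  let f := (Equiv.subtypeUnivEquiv horbit).symm.trans (MulAction.orbitZPowersEquiv π v₀)
  have hsymm : ∀ k : ℤ, f.symm k = (π ^ k) v₀ := fun k =>
    congrArg Subtype.val (MulAction.orbitZPowersEquiv_symm_apply' π v₀ k)
  have hf : ∀ v, f (σ v) = f v + 1 := fun v => by
    obtain ⟨k, hk⟩ : ∃ k : ℤ, f v = k := ⟨_, (ZMod.intCast_zmod_cast (f v)).symm⟩
    have hv : (π ^ k) v₀ = v := by rw [← hsymm, ← hk, f.symm_apply_apply]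
    apply f.symm.injective
    rw [f.symm_apply_apply, hk, add_comm, ← Int.cast_one, ← Int.cast_add, hsymm, zpow_one_add,
      Equiv.Perm.mul_apply, hv]
    rfl
  refine ⟨_, Nat.pos_of_neZero _, f, fun i j => (harrow i j).trans ?_, fun i j a b => ?_⟩
  · rw [← hf, f.injective.eq_iff]
  · exact eq_of_heq (Sigma.mk.inj_iff.mp (Subsingleton.elim (⟨j, a⟩ : Σ j, i ⟶ j) ⟨j, b⟩)).2

namespace MonomialPresentation

variable {k : Type u} {A : Type v} [Field k] [Ring A] [Algebra k A] [Fintype V]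
  {P : MonomialPresentation k A V} {d : ℕ}

lemma PerfectPair.length_add_length (htr : ∀ {i j : V} (p : Path i j), P.Z p ↔ d ≤ p.length)
    (hnsrc : NoSources V) {i j l : V} {p : Path i j} {q : Path l i} (h : P.PerfectPair p q) :
    p.length + q.length = d := by
  obtain ⟨hp, -, hpz, hqz, hzc, hR, -⟩ := h
  simp only [htr, Path.length_comp] at hpz hqz hzc
  obtain ⟨m, q₀, hq₀⟩ := hnsrc.exists_path (d - p.length) i
  obtain ⟨x, rfl⟩ := hR m q₀ (by rw [htr]; omega) (by rw [htr, Path.length_comp]; omega)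
  simp only [Path.length_comp] at hq₀
  omega

lemma PerfectPair.in_arrow_eq (htr : ∀ {i j : V} (p : Path i j), P.Z p ↔ d ≤ p.length)
    (hnsrc : NoSources V) {i j l u v w : V} {p : Path i j} {q : Path l i}
    (h : P.PerfectPair p q) {a : Path l u} {e : u ⟶ v} {b : Path v i}
    (hq : q = (a.cons e).comp b) (e' : w ⟶ v) : (⟨w, e'⟩ : Σ w, w ⟶ v) = ⟨u, e⟩ := by
  have hlen := h.length_add_length htr hnsrc
  obtain ⟨-, -, -, hqz, -, hR, -⟩ := h
  rw [htr] at hqz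
  obtain ⟨m, c, hc⟩ := hnsrc.exists_path a.length w
  have hl : ((c.cons e').comp b).length = q.length := by simp [hq, hc]
  obtain ⟨x, hx⟩ := hR m ((c.cons e').comp b) (by rw [htr]; omega)
    (by rw [htr, Path.length_comp]; omega)
  have hx₀ : x.length = 0 := by
    have := congrArg Path.length hx
    rw [hl, Path.length_comp] at this
    omega
  cases Path.eq_of_length_zero x hx₀
  rw [Path.eq_nil_of_length_zero x hx₀, Path.nil_comp, hq, Path.comp_inj_left] at hx
  exact Sigma.ext (Path.obj_eq_of_cons_eq_cons hx) (Path.hom_heq_of_cons_eq_cons hx)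

lemma PerfectPair.out_arrow_eq (htr : ∀ {i j : V} (p : Path i j), P.Z p ↔ d ≤ p.length)
    (hnsrc : NoSources V) (hnsk : NoSinks V) {i j l u v w : V} {p : Path i j} {q : Path l i}
    (h : P.PerfectPair p q) {a : Path i u} {e : u ⟶ v} {b : Path v j}
    (hp : p = (a.cons e).comp b) (e' : u ⟶ w) : (⟨w, e'⟩ : Σ w, u ⟶ w) = ⟨v, e⟩ := by
  have hlen := h.length_add_length htr hnsrc
  obtain ⟨-, -, hpz, -, -, -, hL⟩ := h
  rw [htr] at hpz
  obtain ⟨m, c, hc⟩ := hnsk.exists_path b.length w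
  have hl : ((a.cons e').comp c).length = p.length := by simp [hp, hc]
  obtain ⟨y, hy⟩ := hL m ((a.cons e').comp c) (by rw [htr]; omega)
    (by rw [htr, Path.length_comp]; omega)
  have hy₀ : y.length = 0 := by
    have := congrArg Path.length hy
    rw [hl, Path.length_comp] at this
    omega
  cases Path.eq_of_length_zero y hy₀
  rw [Path.eq_nil_of_length_zero y hy₀, Path.comp_nil, hp] at hy
  obtain ⟨rfl, hcons⟩ := Sigma.mk.inj_iff.mp (Path.sigma_eq_of_comp_eq_comp_s10 hy (by simp))
  rw [eq_of_heq (Path.hom_heq_of_cons_eq_cons (eq_of_heq hcons))]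

def PerfectPairClosed (P : MonomialPresentation k A V) (C : Set (PathIn V)) : Prop :=
  (∀ y ∈ C, ∃ z ∈ C, P.PerfectPairS y z) ∧ ∀ z ∈ C, ∃ y ∈ C, P.PerfectPairS y z

lemma IsPerfectPath.exists_perfectPairClosed {x : PathIn V} (h : P.IsPerfectPath x) :
    ∃ C : Set (PathIn V), x ∈ C ∧ P.PerfectPairClosed C := by
  obtain ⟨n, c, h₀, hlast, hc⟩ := h
  refine ⟨Set.range c, ⟨0, h₀⟩, ?_, ?_⟩
  · rintro _ ⟨m, rfl⟩
    induction m using Fin.lastCases with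
    | last => exact ⟨_, ⟨(0 : Fin (n + 1)).succ, rfl⟩, by rw [hlast, ← h₀]; exact hc 0⟩
    | cast m => exact ⟨_, ⟨m.succ, rfl⟩, hc m⟩
  · rintro _ ⟨m, rfl⟩
    induction m using Fin.cases with
    | zero =>
      exact ⟨_, ⟨(Fin.last n).castSucc, rfl⟩, by rw [h₀, ← hlast]; exact hc (Fin.last n)⟩
    | succ m => exact ⟨_, ⟨m.castSucc, rfl⟩, hc m⟩

lemma PerfectPairClosed.exists_in_arrow (htr : ∀ {i j : V} (p : Path i j), P.Z p ↔ d ≤ p.length)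
    (hnsrc : NoSources V) {C : Set (PathIn V)} (hC : P.PerfectPairClosed C)
    {y : PathIn V} (hy : y ∈ C) {v : V} (hv : v ∈ y.2.2.vertices) :
    ∃ (u : V) (e : u ⟶ v), (∃ y' ∈ C, u ∈ y'.2.2.vertices) ∧ ∀ z : Σ w, w ⟶ v, z = ⟨u, e⟩ := by
  obtain ⟨a, b, hab⟩ := Path.exists_eq_comp_of_mem_vertices _ hv
  cases a with
  | cons a e =>
    obtain ⟨-, -, i, j, l, p, q, -, rfl, hpq⟩ := hC.2 y hy
    exact ⟨_, e, ⟨_, hy, by rw [show q = _ from hab]; simp⟩,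
      fun ⟨w, e'⟩ => hpq.in_arrow_eq htr hnsrc hab e'⟩
  | nil =>
    obtain ⟨z, hz, i, j, l, p, q, rfl, rfl, hpq⟩ := hC.1 y hy
    obtain ⟨_, q, e, rfl⟩ :=
      (Path.length_ne_zero_iff_eq_cons q).mp (Nat.one_le_iff_ne_zero.mp hpq.2.1)
    exact ⟨_, e, ⟨_, hz, by simp⟩,
      fun ⟨w, e'⟩ => hpq.in_arrow_eq htr hnsrc (b := .nil) rfl e'⟩

lemma PerfectPairClosed.exists_out_arrow (htr : ∀ {i j : V} (p : Path i j), P.Z p ↔ d ≤ p.length)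
    (hnsrc : NoSources V) (hnsk : NoSinks V) {C : Set (PathIn V)} (hC : P.PerfectPairClosed C)
    {y : PathIn V} (hy : y ∈ C) {v : V} (hv : v ∈ y.2.2.vertices) :
    ∃ (w : V) (e : v ⟶ w), (∃ y' ∈ C, w ∈ y'.2.2.vertices) ∧ ∀ z : Σ w, v ⟶ w, z = ⟨w, e⟩ := by
  obtain ⟨a, b, hab⟩ := Path.exists_eq_comp_of_mem_vertices _ hv
  by_cases hb : b.length = 0
  · obtain ⟨x, hx, i, j, l, p, q, rfl, rfl, hpq⟩ := hC.2 y hy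
    cases Path.eq_of_length_zero b hb
    obtain ⟨_, e, r, rfl, -⟩ :=
      (Path.length_ne_zero_iff_eq_comp p).mp (Nat.one_le_iff_ne_zero.mp hpq.1)
    exact ⟨_, e, ⟨_, hx, by simp [Path.start_mem_vertices]⟩,
      fun ⟨w, e'⟩ => hpq.out_arrow_eq htr hnsrc hnsk (a := .nil) rfl e'⟩
  · obtain ⟨w, e, r, rfl, -⟩ := (Path.length_ne_zero_iff_eq_comp b).mp hb
    obtain ⟨-, -, i, j, l, p, q, rfl, rfl, hpq⟩ := hC.1 y hy
    have hp : p = (a.cons e).comp r := by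
      rw [show p = _ from hab, ← Path.comp_assoc, Path.comp_toPath_eq_cons]
    exact ⟨_, e, ⟨_, hy, by simp [hp, Path.start_mem_vertices]⟩,
      fun ⟨w, e'⟩ => hpq.out_arrow_eq htr hnsrc hnsk hp e'⟩

theorem IsPerfectPath.isBasicCycleQuiver (htr : ∀ {i j : V} (p : Path i j), P.Z p ↔ d ≤ p.length)
    (hconn : QuiverConnected V) (hnsrc : NoSources V) (hnsk : NoSinks V) {x : PathIn V}
    (h : P.IsPerfectPath x) : IsBasicCycleQuiver V := by
  obtain ⟨C, hx, hC⟩ := h.exists_perfectPairClosed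
  have hall : ∀ v, ∃ y ∈ C, v ∈ y.2.2.vertices := by
    refine hconn.forall_of_arrow_iff _ ⟨x, hx, Path.start_mem_vertices _⟩ fun a b ⟨e⟩ => ⟨?_, ?_⟩
    · rintro ⟨y, hy, ha⟩
      obtain ⟨w, _, hw, huniq⟩ := hC.exists_out_arrow htr hnsrc hnsk hy ha
      obtain rfl : b = w := congrArg Sigma.fst (huniq ⟨b, e⟩)
      exact hw
    · rintro ⟨y, hy, hb⟩
      obtain ⟨u, _, hu, huniq⟩ := hC.exists_in_arrow htr hnsrc hy hb
      obtain rfl : a = u := congrArg Sigma.fst (huniq ⟨a, e⟩)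
      exact hu
  refine isBasicCycleQuiver_of_subsingleton hconn hnsk (fun v => ?_) (fun v => ?_)
  · obtain ⟨y, hy, hv⟩ := hall v
    obtain ⟨u, e, -, huniq⟩ := hC.exists_in_arrow htr hnsrc hy hv
    exact ⟨fun z z' => (huniq z).trans (huniq z').symm⟩
  · obtain ⟨y, hy, hv⟩ := hall v
    obtain ⟨w, e, -, huniq⟩ := hC.exists_out_arrow htr hnsrc hnsk hy hv
    exact ⟨fun z z' => (huniq z).trans (huniq z').symm⟩

lemma perfectPair_of_length_add_eq (htr : ∀ {i j : V} (p : Path i j), P.Z p ↔ d ≤ p.length)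
    (hin : ∀ j : V, Subsingleton (Σ i, i ⟶ j)) (hout : ∀ i : V, Subsingleton (Σ j, i ⟶ j))
    {i j l : V} {p : Path i j} {q : Path l i} (hp : 1 ≤ p.length) (hq : 1 ≤ q.length)
    (h : p.length + q.length = d) : P.PerfectPair p q := by
  refine ⟨hp, hq, by rw [htr]; omega, by rw [htr]; omega, by rw [htr, Path.length_comp]; omega,
    fun m q' hq' hzc => ?_, fun m p' hp' hzc => ?_⟩
  · rw [htr] at hq'
    rw [htr, Path.length_comp] at hzc
    obtain ⟨_, x, y, rfl, hx⟩ :=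
      q'.exists_eq_comp_of_le_length (n := q'.length - q.length) (by omega)
    rw [Path.length_comp] at hq' hzc hx
    obtain ⟨rfl, hy⟩ := Sigma.mk.inj_iff.mp
      (Path.sigma_eq_of_length_eq_of_subsingleton_in hin y q (by omega))
    exact ⟨x, by rw [eq_of_heq hy]⟩
  · rw [htr, Path.length_comp] at hzc
    obtain ⟨_, x, y, rfl, hx⟩ := p'.exists_eq_comp_of_le_length (n := p.length) (by omega)
    obtain ⟨rfl, hxp⟩ := Sigma.mk.inj_iff.mp
      (Path.sigma_eq_of_length_eq_of_subsingleton_out hout x p hx)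
    exact ⟨y, by rw [eq_of_heq hxp]⟩

lemma isPerfectPath_of_injective {T : Type*} [Finite T] {F : T → T} (hF : Function.Injective F)
    (c : T → PathIn V) (hc : ∀ t, P.PerfectPairS (c t) (c (F t))) (t : T) :
    P.IsPerfectPath (c t) := by
  obtain ⟨N, hN, hper⟩ := hF.mem_periodicPts t
  refine ⟨N - 1, fun m => c (F^[m] t), rfl, ?_, fun m => ?_⟩
  · simp only [Fin.val_last, Nat.sub_add_cancel hN, hper.eq]
  · simp only [Fin.val_succ, Function.iterate_succ_apply', Fin.val_castSucc]
    exact hc _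

theorem exists_isPerfectPath_of_subsingleton (hd : 2 ≤ d)
    (htr : ∀ {i j : V} (p : Path i j), P.Z p ↔ d ≤ p.length) (hnsrc : NoSources V)
    (hin : ∀ j : V, Subsingleton (Σ i, i ⟶ j)) (hout : ∀ i : V, Subsingleton (Σ j, i ⟶ j))
    (j₀ : V) : ∃ x, P.IsPerfectPath x := by
  choose src path hlen using fun (j : V) (L : ℕ) => hnsrc.exists_path L j
  -- `(j, ℓ)` encodes the chosen path of length `ℓ + 1` ending at `j`
  let c : V × Fin (d - 1) → PathIn V := fun t => ⟨_, t.1, path t.1 (t.2 + 1)⟩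
  let F : V × Fin (d - 1) → V × Fin (d - 1) := fun t => (src t.1 (t.2 + 1), t.2.rev)
  have hF : Function.Injective F := by
    rintro ⟨j, ℓ⟩ ⟨j', ℓ'⟩ h
    obtain ⟨hs, hℓ⟩ := Prod.mk.inj h
    cases Fin.rev_injective hℓ
    have end_eq : ∀ (s s' : V) (p : Path s j) (p' : Path s' j'), s = s' → p.length = p'.length →
        j = j' := by
      rintro s _ p p' rfl hl
      exact congrArg Sigma.fst (Path.sigma_eq_of_length_eq_of_subsingleton_out hout p p' hl)
    rw [end_eq _ _ _ _ hs (by rw [hlen, hlen])]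
  refine ⟨_, isPerfectPath_of_injective hF c (fun t => ⟨_, _, _, _, _, rfl, rfl, ?_⟩)
    (j₀, ⟨0, by omega⟩)⟩
  have hℓ := t.2.isLt
  exact perfectPair_of_length_add_eq htr hin hout (by rw [hlen]; omega) (by rw [hlen]; omega)
    (by rw [hlen, hlen, Fin.val_rev]; omega)

end MonomialPresentation

end

open MonomialPresentation in
/-- Example 3.8: a truncated quiver algebra `A = kQ/J^d` on a connected quiver `Q`
with no sources or sinks admits a perfect path if and only if `Q` is a basic cycle. -/
theorem truncated_has_perfect_path_iff_basic_cycle (k : Type u) (A : Type v) (V : Type w)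
    [Field k] [Ring A] [Algebra k A] [Quiver.{w} V] [Fintype V]
    (P : MonomialPresentation k A V) (d : ℕ) (hd : 2 ≤ d)
    (htr : ∀ {i j : V} (p : Quiver.Path i j), P.Z p ↔ d ≤ p.length)
    (hconn : QuiverConnected V) (hnsrc : NoSources V) (hnsk : NoSinks V) :
    (∃ x : PathIn V, P.IsPerfectPath x) ↔ IsBasicCycleQuiver V := by
  constructor
  · rintro ⟨x, hx⟩
    exact hx.isBasicCycleQuiver htr hconn hnsrc hnsk
  · intro h
    obtain ⟨j₀⟩ := hconn.1
    exact exists_isPerfectPath_of_subsingleton hd htr hnsrc h.subsingleton_in h.subsingleton_out j₀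
end

section
/- Let A = kZ_n/I be a monomial Nakayama algebra on the basic n-cycle Z_n and let p be a nonzero nontrivial path in A. Then p is a perfect path if and only if both vertices s(p) and t(p) are θ-cyclically black, where θ(i) = [i + c_i], c_i = dim_k Ae_i, a vertex i is black if c_i ≤ c_{[i+1]}, and i is θ-cyclically black if i ∈ ⋂_{d≥0} Im θ^d and θ^d(i) is black for all d ≥ 0. -/
universe u v w

/-- The basic `n`-cycle quiver on `ZMod n`: one arrow `i → i + 1` for each vertex. -/
instance cycleQuiver (n : ℕ) : Quiver (ZMod n) := ⟨fun i j => PLift (j = i + 1)⟩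

/-- The map `θ(i) = [i + c_i]` of Gustafson. -/
def thetaMap (n : ℕ) (c : ZMod n → ℕ) : ZMod n → ZMod n := fun t => t + (c t : ZMod n)

/-- The vertex `i` is black: `c_i ≤ c_{[i+1]}`, i.e. `P_i` is a minimal projective. -/
def Black (n : ℕ) (c : ZMod n → ℕ) (i : ZMod n) : Prop := c i ≤ c (i + 1)

/-- The vertex `i` is `θ`-cyclically black: `i ∈ ⋂_{e ≥ 0} Im θ^e` and `θ^e(i)` is
black for all `e ≥ 0`. -/
def CyclicallyBlack (n : ℕ) (c : ZMod n → ℕ) (i : ZMod n) : Prop :=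
  (∀ e : ℕ, ∃ a : ZMod n, (thetaMap n c)^[e] a = i) ∧
  (∀ e : ℕ, Black n c ((thetaMap n c)^[e] i))

/-!
On the cycle quiver a path is determined by its source and its length, and a path out of `i`
is zero exactly when its length is at least `c_i`. A perfect pair `(p, q)` with `q : l → i`
thereby becomes arithmetic: `|p| + |q| = c_l`, `|p| < c_i` and `l` is black; in particular
`θ(s(q)) = t(p)`. Along a perfect cycle `θ` therefore maps the set of sources onto itself,
and all of them are black.

Conversely, a nonzero path `p` with cyclically black ends has a perfect partner `q` whose
source is a cyclically black `θ`-preimage of `t(p)`: the Kupisch inequalities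
`c_v ≤ c_{v+d} + d` make `q` nonzero. Since `p` is determined by `q`, continuing in this way
is injective on the finite set of such paths, so it eventually returns to `p`.
-/

open Function Set in
theorem Function.mem_periodicPts_iff_forall_mem_range_iterate {α : Type*} [Fintype α]
    {f : α → α} {x : α} : x ∈ periodicPts f ↔ ∀ e, x ∈ range f^[e] := by
  refine ⟨fun hx e => ?_, fun h => ?_⟩
  · obtain ⟨a, -, ha⟩ := (bijOn_periodicPts f).surjOn.iterate e hx
    exact ⟨a, ha⟩
  obtain ⟨a, rfl⟩ := h (Fintype.card α)
  have of_iterate_eq : ∀ s t : ℕ, s < t → t ≤ Fintype.card α → f^[s] a = f^[t] a →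
      f^[Fintype.card α] a ∈ periodicPts f := by
    intro s t hst ht hs
    have hper : IsPeriodicPt f (t - s) (f^[s] a) := by
      rw [IsPeriodicPt, IsFixedPt, ← iterate_add_apply, Nat.sub_add_cancel hst.le, hs]
    have := hper.apply_iterate (Fintype.card α - s)
    rw [← iterate_add_apply, Nat.sub_add_cancel (by omega)] at this
    exact mk_mem_periodicPts (by omega) this
  obtain ⟨s, t, hst, hs⟩ := Fintype.exists_ne_map_eq_of_card_lt
    (fun s : Fin (Fintype.card α + 1) => f^[s] a) (by simp)
  rcases hst.lt_or_gt with hlt | hlt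
  · exact of_iterate_eq s t hlt (by omega) hs
  · exact of_iterate_eq t s hlt (by omega) hs.symm

open Fin.CommRing in
theorem exists_int_chain_of_fin_cycle {α : Type*} {R : α → α → Prop} {N : ℕ}
    {c : Fin (N + 2) → α} (hc : c 0 = c (Fin.last (N + 1)))
    (h : ∀ m : Fin (N + 1), R (c m.castSucc) (c m.succ)) :
    ∃ e : ℤ → α, e 0 = c 0 ∧ ∀ t, R (e t) (e (t + 1)) := by
  refine ⟨fun t => c (t : Fin (N + 1)).castSucc, by simp, fun t => ?_⟩
  simp only [Int.cast_add, Int.cast_one]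
  generalize (t : Fin (N + 1)) = m
  induction m using Fin.lastCases with
  | last => rw [Fin.last_add_one, Fin.castSucc_zero, hc, ← Fin.succ_last]; exact h _
  | cast m => rw [Fin.coeSucc_eq_succ, ← Fin.succ_castSucc]; exact h _

theorem Set.Finite.mem_periodicPts_of_mapsTo_of_injOn {α : Type*} {f : α → α} {s : Set α}
    (hs : s.Finite) (hmaps : Set.MapsTo f s s) (hinj : Set.InjOn f s) {x : α} (hx : x ∈ s) :
    x ∈ Function.periodicPts f := by
  have := hs.to_subtype
  have hg := (hmaps.restrict_inj.2 hinj).mem_periodicPts ⟨x, hx⟩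
  exact (show Function.Semiconj Subtype.val (hmaps.restrict f s s) f from fun _ => rfl)
    |>.mapsTo_periodicPts hg

namespace CycleQuiver

variable {n : ℕ}

theorem target_eq_add_length {i j : ZMod n} (p : Quiver.Path i j) : j = i + p.length := by
  induction p with
  | nil => simp
  | cons p e ih =>
    rw [Quiver.Path.length_cons, Nat.cast_succ]
    linear_combination e.down + ih

theorem path_ext {i j : ZMod n} {p q : Quiver.Path i j} (h : p.length = q.length) :
    p = q := by
  induction p with
  | nil => cases q with
    | nil => rfl
    | cons q f => simp at h
  | cons p e ih => cases q with
    | nil => simp at h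
    | cons q f =>
      obtain rfl := add_right_cancel (f.down.symm.trans e.down)
      rw [ih (by simpa using h), Subsingleton.elim (α := PLift _) e f]

def pathFrom (i : ZMod n) : ℕ → Σ j, Quiver.Path i j
  | 0 => ⟨i, .nil⟩
  | m + 1 => ⟨(pathFrom i m).1 + 1, (pathFrom i m).2.cons ⟨rfl⟩⟩

@[simp] theorem length_pathFrom (i : ZMod n) (m : ℕ) : (pathFrom i m).2.length = m := by
  induction m with
  | zero => rfl
  | succ m ih => simp [pathFrom, ih]

theorem exists_path_of_eq_add {i j : ZMod n} {m : ℕ} (h : j = i + m) :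
    ∃ p : Quiver.Path i j, p.length = m := by
  have hm := length_pathFrom i m
  generalize pathFrom i m = x at hm
  obtain ⟨j', p⟩ := x
  obtain rfl : j = j' := by rw [h, target_eq_add_length p, hm]
  exact ⟨p, hm⟩

theorem pathIn_ext {x y : PathIn (ZMod n)} (hs : x.1 = y.1)
    (hl : x.2.2.length = y.2.2.length) : x = y := by
  obtain ⟨i, j, p⟩ := x
  obtain ⟨i', j', q⟩ := y
  obtain rfl : i = i' := hs
  simp only at hl
  obtain rfl : j = j' := by rw [target_eq_add_length p, target_eq_add_length q, hl]
  rw [path_ext hl]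

theorem exists_comp_eq_iff {a b c : ZMod n} (r : Quiver.Path a c) (q : Quiver.Path b c) :
    (∃ x : Quiver.Path a b, r = x.comp q) ↔ q.length ≤ r.length := by
  refine ⟨fun ⟨x, hx⟩ => by simp [hx], fun h => ?_⟩
  obtain ⟨x, hx⟩ := exists_path_of_eq_add (i := a) (j := b) (m := r.length - q.length) (by
    rw [Nat.cast_sub h]; linear_combination target_eq_add_length r - target_eq_add_length q)
  exact ⟨x, path_ext (by simp; omega)⟩

theorem exists_eq_comp_iff {a b c : ZMod n} (r : Quiver.Path a c) (p : Quiver.Path a b) :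
    (∃ y : Quiver.Path b c, r = p.comp y) ↔ p.length ≤ r.length := by
  refine ⟨fun ⟨y, hy⟩ => by simp [hy], fun h => ?_⟩
  obtain ⟨y, hy⟩ := exists_path_of_eq_add (i := b) (j := c) (m := r.length - p.length) (by
    rw [Nat.cast_sub h]; linear_combination target_eq_add_length r - target_eq_add_length p)
  exact ⟨y, path_ext (by simp; omega)⟩

theorem finite_setOf_length_lt [NeZero n] (f : ZMod n → ℕ) :
    {x : PathIn (ZMod n) | x.2.2.length < f x.1}.Finite := by
  rw [← Set.finite_coe_iff]
  refine Finite.of_injective (β := Σ v, Fin (f v)) (fun x => ⟨x.1.1, x.1.2.2.length, x.2⟩) ?_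
  intro x y h
  exact Subtype.ext (pathIn_ext (congrArg (·.1) h) (congrArg (fun s => (s.2 : ℕ)) h))

end CycleQuiver

section Theta

open Function Set

variable {n : ℕ} {c : ZMod n → ℕ}

theorem CyclicallyBlack.black {x : ZMod n} (hx : CyclicallyBlack n c x) : Black n c x :=
  hx.2 0

theorem cyclicallyBlack_of_mapsTo_of_surjOn {X : Set (ZMod n)}
    (hmaps : MapsTo (thetaMap n c) X X) (hsurj : SurjOn (thetaMap n c) X X)
    (hblack : ∀ x ∈ X, Black n c x) {x : ZMod n} (hx : x ∈ X) : CyclicallyBlack n c x :=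
  ⟨fun e => let ⟨a, _, ha⟩ := hsurj.iterate e hx; ⟨a, ha⟩,
    fun e => hblack _ (hmaps.iterate e hx)⟩

theorem CyclicallyBlack.exists_thetaMap_eq [NeZero n] {x : ZMod n}
    (hx : CyclicallyBlack n c x) : ∃ y, thetaMap n c y = x ∧ CyclicallyBlack n c y := by
  obtain ⟨K, hK, hper⟩ :=
    mem_periodicPts.1 (mem_periodicPts_iff_forall_mem_range_iterate.2 hx.1)
  refine ⟨(thetaMap n c)^[K - 1] x, ?_, ?_, fun e => ?_⟩
  · rw [← iterate_succ_apply' (thetaMap n c), Nat.succ_eq_add_one, Nat.sub_add_cancel hK]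
    exact hper
  · exact mem_periodicPts_iff_forall_mem_range_iterate.1
      (mk_mem_periodicPts hK (hper.apply_iterate _))
  · rw [← iterate_add_apply]
    exact hx.2 _

theorem lt_of_thetaMap_eq_add (hc : ∀ v (d : ℕ), c v ≤ c (v + (d : ZMod n)) + d)
    {v w : ZMod n} {a : ℕ} (ha : a < c v) (hw : thetaMap n c w = v + a) : a < c w := by
  by_contra! h
  have hwv : w = v + ((a - c w : ℕ) : ZMod n) := by
    rw [Nat.cast_sub h, add_sub, ← hw, thetaMap]
    ring
  have := hc v (a - c w)
  rw [← hwv] at this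
  omega

end Theta

namespace MonomialPresentation

open CycleQuiver Function Set

variable {k : Type u} {A : Type v} {n : ℕ} [NeZero n] [Field k] [Ring A] [Algebra k A]
  (P : MonomialPresentation k A (ZMod n))

/-- The Kupisch series `c_i = dim_k Ae_i` of the paper (`finrank_span_ι_nil`). -/
noncomputable def kupisch (i : ZMod n) : ℕ := sInf {m | P.Z (pathFrom i m).2}

theorem Z_iff_kupisch_le {i j : ZMod n} (p : Quiver.Path i j) :
    P.Z p ↔ P.kupisch i ≤ p.length := by
  have hZ : ∀ {j'} (q : Quiver.Path i j'), q.length = p.length → (P.Z q ↔ P.Z p) :=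
    fun q h => Iff.of_eq (congrArg (fun x : PathIn (ZMod n) => P.Z x.2.2)
      (pathIn_ext (x := ⟨i, _, q⟩) (y := ⟨i, j, p⟩) rfl h))
  constructor
  · exact fun h => Nat.sInf_le ((hZ _ (length_pathFrom i _)).2 h)
  · intro h
    obtain ⟨d, hd⟩ := P.admissible
    have hκ : P.Z (pathFrom i (P.kupisch i)).2 :=
      Nat.sInf_mem (s := {m | P.Z (pathFrom i m).2}) ⟨d, hd _ (length_pathFrom i d).ge⟩
    obtain ⟨r, rfl⟩ := (exists_eq_comp_iff p (pathFrom i (P.kupisch i)).2).2 (by simpa using h)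
    exact P.z_mul _ _ (Or.inl hκ)

theorem kupisch_le_add (v : ZMod n) (d : ℕ) :
    P.kupisch v ≤ P.kupisch (v + (d : ZMod n)) + d := by
  set w := v + (d : ZMod n)
  obtain ⟨r, hr⟩ := exists_path_of_eq_add (i := v) (j := w) rfl
  have hq := (P.Z_iff_kupisch_le (pathFrom w (P.kupisch w)).2).2 (by simp)
  have hz := (P.Z_iff_kupisch_le _).1 (P.z_mul r _ (Or.inr hq))
  rw [Quiver.Path.length_comp, hr, length_pathFrom] at hz
  omega

theorem ι_mul_ι_nil_s19 {i j : ZMod n} (p : Quiver.Path i j) :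
    P.ι p * P.ι (Quiver.Path.nil : Quiver.Path i i) = P.ι p := by
  rw [← P.mul_comp, Quiver.Path.nil_comp]

theorem ι_mul_ι_nil_of_ne {i v w : ZMod n} (p : Quiver.Path v w) (h : v ≠ i) :
    P.ι p * P.ι (Quiver.Path.nil : Quiver.Path i i) = 0 := by
  rw [← P.ι_mul_ι_nil_s19 p, mul_assoc, P.orth v i h, mul_zero]

theorem linearIndependent_ι_pathFrom (i : ZMod n) :
    LinearIndependent k fun m : Fin (P.kupisch i) => P.ι (pathFrom i m).2 := by
  have hnz (m : Fin (P.kupisch i)) : ¬ P.Z (pathFrom i m).2 := by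
    simp [P.Z_iff_kupisch_le]
  refine P.indep.comp (fun m : Fin (P.kupisch i) => ⟨⟨i, pathFrom i m⟩, hnz m⟩)
    fun m m' h => Fin.ext ?_
  simpa using congrArg (fun x : {y : PathIn (ZMod n) // ¬ P.Z y.2.2} => x.1.2.2.length) h

theorem ι_mul_ι_nil_mem_span (i : ZMod n) {v w : ZMod n} (q : Quiver.Path v w) :
    P.ι q * P.ι (Quiver.Path.nil : Quiver.Path i i) ∈
      Submodule.span k (range fun m : Fin (P.kupisch i) => P.ι (pathFrom i m).2) := by
  by_cases hv : v = i
  · subst hv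
    rw [P.ι_mul_ι_nil_s19]
    by_cases hq : P.Z q
    · rw [(P.zero_iff q).2 hq]
      exact Submodule.zero_mem _
    · refine Submodule.subset_span
        ⟨⟨q.length, not_le.1 ((P.Z_iff_kupisch_le q).not.1 hq)⟩, ?_⟩
      exact congrArg (fun x : PathIn (ZMod n) => P.ι x.2.2)
        (pathIn_ext (x := ⟨v, pathFrom v q.length⟩) (y := ⟨v, w, q⟩) rfl (by simp))
  · rw [P.ι_mul_ι_nil_of_ne q hv]
    exact Submodule.zero_mem _

theorem span_ι_nil_eq (i : ZMod n) :
    (Submodule.span A {P.ι (Quiver.Path.nil : Quiver.Path i i)}).restrictScalars k =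
      Submodule.span k (range fun m : Fin (P.kupisch i) => P.ι (pathFrom i m).2) := by
  apply le_antisymm
  · intro x hx
    obtain ⟨a, rfl⟩ :=
      Submodule.mem_span_singleton.1 ((Submodule.restrictScalars_mem k _ _).1 hx)
    have ha : a ∈ Submodule.span k (range fun x : PathIn (ZMod n) => P.ι x.2.2) :=
      P.span_top ▸ Submodule.mem_top
    refine (Submodule.map_span_le (LinearMap.mulRight k _) _ _).2 ?_
      (Submodule.mem_map_of_mem ha)
    rintro _ ⟨⟨v, w, q⟩, rfl⟩
    exact P.ι_mul_ι_nil_mem_span i q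
  · rw [Submodule.span_le]
    rintro _ ⟨m, rfl⟩
    exact Submodule.mem_span_singleton.2 ⟨_, P.ι_mul_ι_nil_s19 _⟩

theorem finrank_span_ι_nil (i : ZMod n) :
    Module.finrank k ((Submodule.span A
      {P.ι (Quiver.Path.nil : Quiver.Path i i)}).restrictScalars k) = P.kupisch i := by
  rw [span_ι_nil_eq, finrank_span_eq_card (P.linearIndependent_ι_pathFrom i), Fintype.card_fin]

theorem perfectPair_iff {i j l : ZMod n} (p : Quiver.Path i j) (q : Quiver.Path l i) :
    P.PerfectPair p q ↔ 1 ≤ p.length ∧ 1 ≤ q.length ∧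
      p.length + q.length = P.kupisch l ∧ p.length < P.kupisch i ∧ Black n P.kupisch l := by
  simp only [PerfectPair, P.Z_iff_kupisch_le, Quiver.Path.length_comp, exists_comp_eq_iff,
    exists_eq_comp_iff, not_le]
  have hi := target_eq_add_length q
  constructor
  · rintro ⟨hp1, hq1, hp, -, hpq, hL, hR⟩
    have hsum : p.length + q.length = P.kupisch l := by
      obtain ⟨r, hr⟩ := exists_path_of_eq_add
        (i := i) (j := i + ((P.kupisch l - q.length : ℕ) : ZMod n)) rfl
      have := hR _ r (by omega) (by omega)
      omega
    refine ⟨hp1, hq1, hsum, hp, ?_⟩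
    rw [Black]
    by_contra! hb
    -- a nonzero path `l + 1 → i` killed by `p` and shorter than `q`
    obtain ⟨r, hr⟩ := exists_path_of_eq_add (i := l + 1) (j := i) (m := q.length - 1)
      (by rw [Nat.cast_sub hq1]; linear_combination hi)
    have := P.kupisch_le_add l 1
    push_cast at this
    have := hL _ r (by omega) (by omega)
    omega
  · rintro ⟨hp1, hq1, hsum, hp, hb⟩
    refine ⟨hp1, hq1, hp, by omega, by omega, fun m r hr hrp => ?_, fun m r hr hqr => by omega⟩
    by_contra! hlt
    have hm : m = l + 1 + ((q.length - r.length - 1 : ℕ) : ZMod n) := by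
      rw [Nat.cast_sub (by omega), Nat.cast_sub (by omega)]
      linear_combination hi - target_eq_add_length r
    have := P.kupisch_le_add (l + 1) (q.length - r.length - 1)
    rw [← hm] at this
    unfold Black at hb
    omega

theorem perfectPairS_iff (x y : PathIn (ZMod n)) :
    P.PerfectPairS x y ↔ x.1 = y.2.1 ∧ 1 ≤ x.2.2.length ∧ 1 ≤ y.2.2.length ∧
      x.2.2.length + y.2.2.length = P.kupisch y.1 ∧ x.2.2.length < P.kupisch x.1 ∧
      Black n P.kupisch y.1 := by
  obtain ⟨i, j, p⟩ := x
  obtain ⟨l, i', q⟩ := y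
  constructor
  · rintro ⟨_, _, _, _, _, ⟨⟩, ⟨⟩, h⟩
    exact ⟨rfl, (P.perfectPair_iff _ _).1 h⟩
  · rintro ⟨rfl, h⟩
    exact ⟨_, _, _, _, _, rfl, rfl, (P.perfectPair_iff _ _).2 h⟩

variable {P}

theorem PerfectPairS.thetaMap_fst {x y : PathIn (ZMod n)} (h : P.PerfectPairS x y) :
    thetaMap n P.kupisch y.1 = x.2.1 := by
  obtain ⟨hxy, -, -, hsum, -, -⟩ := (P.perfectPairS_iff x y).1 h
  rw [thetaMap, ← hsum]
  push_cast
  linear_combination -target_eq_add_length x.2.2 - hxy - target_eq_add_length y.2.2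

theorem PerfectPairS.left_unique {x x' y : PathIn (ZMod n)} (h : P.PerfectPairS x y)
    (h' : P.PerfectPairS x' y) : x = x' := by
  obtain ⟨hxy, -, -, hsum, -, -⟩ := (P.perfectPairS_iff x y).1 h
  obtain ⟨hxy', -, -, hsum', -, -⟩ := (P.perfectPairS_iff x' y).1 h'
  exact pathIn_ext (hxy.trans hxy'.symm) (by omega)

theorem cyclicallyBlack_of_int_chain {e : ℤ → PathIn (ZMod n)}
    (he : ∀ t, P.PerfectPairS (e t) (e (t + 1))) (t : ℤ) :
    CyclicallyBlack n P.kupisch (e t).1 ∧ CyclicallyBlack n P.kupisch (e t).2.1 := by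
  have htarget (t : ℤ) : (e t).2.1 = (e (t - 1)).1 := by
    have := ((P.perfectPairS_iff _ _).1 (he (t - 1))).1
    rw [sub_add_cancel] at this
    exact this.symm
  have hθ (s t : ℤ) (hst : s = t + 2) : thetaMap n P.kupisch (e s).1 = (e t).1 := by
    subst hst
    rw [show t + 2 = t + 1 + 1 by ring, (he _).thetaMap_fst, htarget, add_sub_cancel_right]
  have hX : ∀ x ∈ range fun t => (e t).1, CyclicallyBlack n P.kupisch x := by
    refine fun x hx => cyclicallyBlack_of_mapsTo_of_surjOn ?_ ?_ ?_ hx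
    · rintro _ ⟨t, rfl⟩
      exact ⟨t - 2, (hθ t _ (by ring)).symm⟩
    · rintro _ ⟨t, rfl⟩
      exact ⟨_, ⟨t + 2, rfl⟩, hθ _ t rfl⟩
    · rintro _ ⟨t, rfl⟩
      have := ((P.perfectPairS_iff _ _).1 (he (t - 1))).2.2.2.2.2
      rwa [sub_add_cancel] at this
  exact ⟨hX _ ⟨t, rfl⟩, htarget t ▸ hX _ ⟨t - 1, rfl⟩⟩

variable (P) in
def cyclicallyBlackPaths : Set (PathIn (ZMod n)) :=
  {x | 1 ≤ x.2.2.length ∧ ¬ P.Z x.2.2 ∧ CyclicallyBlack n P.kupisch x.1 ∧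
    CyclicallyBlack n P.kupisch x.2.1}

theorem exists_perfectPairS_of_mem_cyclicallyBlackPaths {x : PathIn (ZMod n)}
    (hx : x ∈ P.cyclicallyBlackPaths) : ∃ y ∈ P.cyclicallyBlackPaths, P.PerfectPairS x y := by
  obtain ⟨h1, hZ, hs, ht⟩ := hx
  rw [P.Z_iff_kupisch_le, not_le] at hZ
  obtain ⟨w, hw, hwb⟩ := ht.exists_thetaMap_eq
  have hx := target_eq_add_length x.2.2
  have hlt := lt_of_thetaMap_eq_add P.kupisch_le_add hZ (hw.trans hx)
  rw [thetaMap] at hw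
  obtain ⟨q, hq⟩ := exists_path_of_eq_add (i := w) (j := x.1)
    (m := P.kupisch w - x.2.2.length) (by
      rw [Nat.cast_sub hlt.le]
      linear_combination -hw - hx)
  refine ⟨⟨w, x.1, q⟩, ⟨by dsimp only; omega, by dsimp only; rw [P.Z_iff_kupisch_le]; omega,
    hwb, hs⟩, (P.perfectPairS_iff _ _).2 ⟨rfl, h1, by dsimp only; omega, by dsimp only; omega,
    hZ, hwb.black⟩⟩

theorem isPerfectPath_of_mem_cyclicallyBlackPaths {x : PathIn (ZMod n)}
    (hx : x ∈ P.cyclicallyBlackPaths) : P.IsPerfectPath x := by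
  choose! f hfS hf using fun y (hy : y ∈ P.cyclicallyBlackPaths) =>
    exists_perfectPairS_of_mem_cyclicallyBlackPaths hy
  have hfin : P.cyclicallyBlackPaths.Finite :=
    (finite_setOf_length_lt P.kupisch).subset fun y hy =>
      not_le.1 ((P.Z_iff_kupisch_le _).not.1 hy.2.1)
  have hmaps : MapsTo f P.cyclicallyBlackPaths P.cyclicallyBlackPaths := hfS
  have hinj : InjOn f P.cyclicallyBlackPaths :=
    fun y hy y' hy' h => (hf y hy).left_unique (h ▸ hf y' hy')
  obtain ⟨T, hT, hper⟩ :=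
    mem_periodicPts.1 (hfin.mem_periodicPts_of_mapsTo_of_injOn hmaps hinj hx)
  obtain ⟨N, rfl⟩ : ∃ N, T = N + 1 := ⟨T - 1, by omega⟩
  exact ⟨N, fun m => f^[m] x, rfl, hper, fun m => by
    simpa only [Fin.val_castSucc, Fin.val_succ, iterate_succ_apply'] using
      hf _ (hmaps.iterate m hx)⟩

end MonomialPresentation

open MonomialPresentation in
theorem nakayama_perfect_path_iff_cyclically_black_general (k : Type u) (A : Type v) (n : ℕ)
    [NeZero n] [Field k] [Ring A] [Algebra k A]
    (P : MonomialPresentation k A (ZMod n)) (c : ZMod n → ℕ)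
    (hc : ∀ i : ZMod n, c i = Module.finrank k
      ((Submodule.span A {P.ι (Quiver.Path.nil : Quiver.Path i i)}).restrictScalars k))
    {i j : ZMod n} (p : Quiver.Path i j) (hp : ¬ P.Z p) (hlen : 1 ≤ p.length) :
    P.IsPerfectPath ⟨i, j, p⟩ ↔ (CyclicallyBlack n c i ∧ CyclicallyBlack n c j) := by
  obtain rfl : c = P.kupisch := funext fun v => (hc v).trans (P.finrank_span_ι_nil v)
  constructor
  · rintro ⟨N, e, he0, hel, he⟩
    obtain ⟨f, hf0, hf⟩ := exists_int_chain_of_fin_cycle (he0.trans hel.symm) he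
    have := cyclicallyBlack_of_int_chain hf 0
    rwa [hf0, he0] at this
  · exact fun ⟨hi, hj⟩ => isPerfectPath_of_mem_cyclicallyBlackPaths ⟨hlen, hp, hi, hj⟩

open MonomialPresentation in
/-- Proposition 6.2: in a monomial Nakayama algebra `A = kZ_n/I` a nonzero nontrivial
path `p` is perfect if and only if both `s(p)` and `t(p)` are `θ`-cyclically black,
where `c_i = dim_k Ae_i`. -/
theorem nakayama_perfect_path_iff_cyclically_black (k : Type u) (A : Type v) (n : ℕ)
    [NeZero n] [Field k] [Ring A] [Algebra k A] [FiniteDimensional k A]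
    (P : MonomialPresentation k A (ZMod n)) (c : ZMod n → ℕ)
    (hc : ∀ i : ZMod n, c i = Module.finrank k
      ((Submodule.span A {P.ι (Quiver.Path.nil : Quiver.Path i i)}).restrictScalars k))
    {i j : ZMod n} (p : Quiver.Path i j) (hp : ¬ P.Z p) (hlen : 1 ≤ p.length) :
    P.IsPerfectPath ⟨i, j, p⟩ ↔ (CyclicallyBlack n c i ∧ CyclicallyBlack n c j) :=
  nakayama_perfect_path_iff_cyclically_black_general k A n P c hc p hp hlen
end
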